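/- arXiv:1607.05127 — 9 statements merged into one kernel-verified Lean document; each statement's English description precedes it below -/
import Mathlib

section
/- Strong duality for the asymmetric shortest transshipment LP: let b ∈ ℝⁿ lie in the column space of A. Then the minimum min{ p(W★x) : x ∈ ℝᵐ, Ax = b } and the maximum max{ bᵀy : y ∈ ℝⁿ, q(R★Aᵀy) ≤ 1 } are both attained and are equal. -/
open Matrix BigOperators

/-- Asymmetric "norm" `p(v) = Σᵢ max(0, vᵢ)`. -/
noncomputable def pnorm {d : Type*} [Fintype d] (v : d → ℝ) : ℝ := ∑ i, max (v i) 0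

/-- Asymmetric "norm" `q(v) = max(0, maxᵢ vᵢ)`. -/
noncomputable def qnorm {d : Type*} [Fintype d] (v : d → ℝ) : ℝ :=
  Finset.univ.fold max 0 v

/-- ∞-norm `‖v‖_∞ = maxᵢ |vᵢ|` (as `max(0, maxᵢ |vᵢ|)`, which agrees with it). -/
noncomputable def infnorm {d : Type*} [Fintype d] (v : d → ℝ) : ℝ :=
  Finset.univ.fold max 0 (fun i => |v i|)

/-- 1-norm `‖v‖₁ = Σᵢ |vᵢ|`. -/
noncomputable def onenorm {d : Type*} [Fintype d] (v : d → ℝ) : ℝ := ∑ i, |v i|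

/-- `W★ : ℝᵐ → ℝ²ᵐ`, sending `x` to `(W₊x, −W₋x)`. -/
noncomputable def Wstar {m : ℕ} (wp wm : Fin m → ℝ) (x : Fin m → ℝ) : Fin m ⊕ Fin m → ℝ :=
  Sum.elim (fun e => wp e * x e) (fun e => -(wm e * x e))

/-- `R★ : ℝᵐ → ℝ²ᵐ`, sending `x` to `(W₊⁻¹x, −W₋⁻¹x)`. -/
noncomputable def Rstar {m : ℕ} (wp wm : Fin m → ℝ) (x : Fin m → ℝ) : Fin m ⊕ Fin m → ℝ :=
  Sum.elim (fun e => x e / wp e) (fun e => -(x e / wm e))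

/-- The transpose `R★ᵀ : ℝ²ᵐ → ℝᵐ`. -/
noncomputable def RstarT {m : ℕ} (wp wm : Fin m → ℝ) (g : Fin m ⊕ Fin m → ℝ) : Fin m → ℝ :=
  fun e => g (Sum.inl e) / wp e - g (Sum.inr e) / wm e

/-- Soft-max `lse_β(v) = (1/β)·ln(Σᵢ e^{β·vᵢ})`. -/
noncomputable def lse {d : Type*} [Fintype d] (β : ℝ) (v : d → ℝ) : ℝ :=
  (1 / β) * Real.log (∑ i, Real.exp (β * v i))

/-- Gradient of the soft-max: `∇lse_β(v)ᵢ = e^{β·vᵢ}/Σⱼ e^{β·vⱼ}`. -/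
noncomputable def gradLse {d : Type*} [Fintype d] (β : ℝ) (v : d → ℝ) : d → ℝ :=
  fun i => Real.exp (β * v i) / ∑ j, Real.exp (β * v j)

/-- Potential `φ_β(π) = lse_β(R★Aᵀπ)`. -/
noncomputable def pot {n m : ℕ} (A : Matrix (Fin n) (Fin m) ℝ) (wp wm : Fin m → ℝ)
    (β : ℝ) (π : Fin n → ℝ) : ℝ :=
  lse β (Rstar wp wm (Aᵀ *ᵥ π))

/-- Gradient of the potential: `∇φ_β(π) = A·R★ᵀ·∇lse_β(R★Aᵀπ)`. -/
noncomputable def gradPot {n m : ℕ} (A : Matrix (Fin n) (Fin m) ℝ) (wp wm : Fin m → ℝ)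
    (β : ℝ) (π : Fin n → ℝ) : Fin n → ℝ :=
  A *ᵥ RstarT wp wm (gradLse β (Rstar wp wm (Aᵀ *ᵥ π)))

/-!
The cost `x ↦ p(W★x)` is a continuous, sublinear gauge with bounded sublevel sets, and
`q(R★z) ≤ 1` says exactly that `z` lies in its dual unit ball `{z | ∀ x, x ⬝ᵥ z ≤ p(W★x)}`.
For any such gauge `f` the primal minimum is attained by coercivity, and the dual maximum by
compactness of the dual unit ball intersected with the range of `Aᵀ`: the dual objective
`b ⬝ᵥ y = x₀ ⬝ᵥ Aᵀy` depends only on `Aᵀy`. Coercivity also makes the cone `{(Ax, t) | f x ≤ t}`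
closed, so whenever `t` is below the primal minimum, Farkas' lemma separates `(b, t)` from it;
the separating functional, normalised in its last coordinate, is a dual-feasible `y` with
`t < b ⬝ᵥ y`.
-/

open Set Bornology

section Epigraph

variable {E F : Type*} [PseudoMetricSpace E] [ProperSpace E] [TopologicalSpace F] [T2Space F]

theorem exists_isMinOn_of_isBounded_sublevel {f : E → ℝ} (hf : Continuous f)
    (hbdd : ∀ T, IsBounded {x | f x ≤ T}) {s : Set E} (hs : IsClosed s) (hne : s.Nonempty) :
    ∃ x ∈ s, IsMinOn f s x := by
  obtain ⟨x₀, hx₀⟩ := hne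
  have hK : IsCompact {x | f x ≤ f x₀} :=
    Metric.isCompact_of_isClosed_isBounded (isClosed_le hf continuous_const) (hbdd _)
  refine hf.continuousOn.exists_isMinOn' hs hx₀ (Filter.mem_inf_of_left ?_)
  exact Filter.mem_of_superset hK.compl_mem_cocompact
    fun x (hx : ¬f x ≤ f x₀) => le_of_not_ge hx

theorem isClosed_image_epigraph {A : E → F} (hA : Continuous A) {f : E → ℝ} (hf : Continuous f)
    (hbdd : ∀ T, IsBounded {x | f x ≤ T}) :
    IsClosed {q : F × ℝ | ∃ x, A x = q.1 ∧ f x ≤ q.2} := by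
  -- near `q` the set is the image of a compact slice of the epigraph
  refine isClosed_of_closure_subset fun q hq => ?_
  set S : Set (E × ℝ) := {r | f r.1 ≤ r.2 ∧ r.2 ∈ Icc (q.2 - 1) (q.2 + 1)}
  have hS : IsCompact S := by
    refine Metric.isCompact_of_isClosed_isBounded ?_ ?_
    · exact (isClosed_le (hf.comp continuous_fst) continuous_snd).inter
        (isClosed_Icc.preimage continuous_snd)
    · exact ((hbdd (q.2 + 1)).prod (Metric.isBounded_Icc _ _)).subset
        fun r hr => ⟨hr.1.trans hr.2.2, hr.2⟩
  set U : Set (F × ℝ) := {r | r.2 ∈ Ioo (q.2 - 1) (q.2 + 1)}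
  have hqU : q ∈ closure (U ∩ {q : F × ℝ | ∃ x, A x = q.1 ∧ f x ≤ q.2}) :=
    (isOpen_Ioo.preimage continuous_snd).inter_closure ⟨by simp, hq⟩
  have hUS : U ∩ {q : F × ℝ | ∃ x, A x = q.1 ∧ f x ≤ q.2} ⊆ Prod.map A id '' S := by
    rintro ⟨p, t⟩ ⟨htU, x, rfl, hxt⟩
    exact ⟨(x, t), ⟨hxt, Ioo_subset_Icc_self htU⟩, rfl⟩
  obtain ⟨⟨x, t⟩, ⟨hxt, -⟩, rfl⟩ :=
    (hS.image (hA.prodMap continuous_id)).isClosed.closure_subset (closure_mono hUS hqU)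
  exact ⟨x, rfl, hxt⟩

end Epigraph

section GaugeDuality

variable {ι κ : Type*} [Fintype ι] [Fintype κ]

def dualUnitBall (f : (ι → ℝ) → ℝ) : Set (ι → ℝ) := {z | ∀ x, x ⬝ᵥ z ≤ f x}

theorem isCompact_dualUnitBall (f : (ι → ℝ) → ℝ) : IsCompact (dualUnitBall f) := by
  classical
  refine Metric.isCompact_of_isClosed_isBounded ?_ ?_
  · simp only [dualUnitBall, ofPred_forall]
    exact isClosed_iInter fun x => isClosed_le (continuous_const.dotProduct continuous_id)
      continuous_const
  · refine forall_isBounded_image_eval_iff.1 fun i =>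
      (Metric.isBounded_Icc (-f (Pi.single i (-1))) (f (Pi.single i 1))).subset ?_
    rintro _ ⟨z, hz, rfl⟩
    have hneg := hz (Pi.single i (-1))
    have hpos := hz (Pi.single i 1)
    simp only [single_dotProduct] at hneg hpos
    simp only [Function.eval, mem_Icc]
    constructor <;> linarith

theorem StrongDual.exists_eq_dotProduct_add_mul (g : StrongDual ℝ ((κ → ℝ) × ℝ)) :
    ∃ y r, ∀ p s, g (p, s) = p ⬝ᵥ y + s * r := by
  classical
  refine ⟨fun i => g (Pi.single i 1, 0), g (0, 1), fun p s => ?_⟩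
  have hp : (p, s) =
      ∑ i, p i • ((Pi.single i 1 : κ → ℝ), (0 : ℝ)) + s • ((0 : κ → ℝ), (1 : ℝ)) := by
    ext i
    · simp [Prod.fst_sum, Pi.single_apply]
    · simp [Prod.snd_sum]
  rw [hp]
  simp only [map_add, map_sum, map_smul, smul_eq_mul, dotProduct]

variable (A : Matrix κ ι ℝ) {f : (ι → ℝ) → ℝ}

theorem dotProduct_le_of_mulVec_eq {x : ι → ℝ} {b y : κ → ℝ} (hx : A *ᵥ x = b)
    (hy : Aᵀ *ᵥ y ∈ dualUnitBall f) : b ⬝ᵥ y ≤ f x := by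
  rw [← hx, dotProduct_comm, ← dotProduct_transpose_mulVec]
  exact hy x

theorem exists_dualUnitBall_lt_dotProduct (hf : Continuous f)
    (hadd : ∀ x x', f (x + x') ≤ f x + f x') (hsmul : ∀ c : ℝ, 0 ≤ c → ∀ x, f (c • x) ≤ c * f x)
    (hbdd : ∀ T, IsBounded {x | f x ≤ T}) {x₀ : ι → ℝ} {b : κ → ℝ} (hx₀ : A *ᵥ x₀ = b) {t : ℝ}
    (ht : ∀ x, A *ᵥ x = b → t < f x) :
    ∃ y, Aᵀ *ᵥ y ∈ dualUnitBall f ∧ t < b ⬝ᵥ y := by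
  let C : ProperCone ℝ ((κ → ℝ) × ℝ) :=
    { carrier := {q | ∃ x, A *ᵥ x = q.1 ∧ f x ≤ q.2}
      add_mem' := by
        rintro ⟨_, _⟩ ⟨_, _⟩ ⟨x, rfl, hx⟩ ⟨x', rfl, hx'⟩
        exact ⟨x + x', mulVec_add .., (hadd x x').trans (add_le_add hx hx')⟩
      zero_mem' := ⟨0, mulVec_zero A, by simpa using hsmul 0 le_rfl 0⟩
      smul_mem' := by
        rintro ⟨c, hc⟩ ⟨_, _⟩ ⟨x, rfl, hx⟩
        exact ⟨c • x, mulVec_smul .., (hsmul c hc x).trans (mul_le_mul_of_nonneg_left hx hc)⟩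
      isClosed' :=
        isClosed_image_epigraph A.mulVecLin.continuous_of_finiteDimensional hf hbdd }
  have hbt : (b, t) ∉ C := fun ⟨x, hx, hxt⟩ => (ht x hx).not_ge hxt
  obtain ⟨g, hgC, hgbt⟩ := C.hyperplane_separation_point hbt
  obtain ⟨y, r, hg⟩ := StrongDual.exists_eq_dotProduct_add_mul g
  have hAx : ∀ x, 0 ≤ (A *ᵥ x) ⬝ᵥ y + f x * r := fun x => hg _ _ ▸ hgC _ ⟨x, rfl, le_rfl⟩
  rw [hg] at hgbt
  have hr : 0 < r := by
    have h₀ := hAx x₀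
    rw [hx₀] at h₀
    nlinarith [ht x₀ hx₀]
  refine ⟨-r⁻¹ • y, fun x => ?_, ?_⟩
  · have h := hAx x
    rw [dotProduct_transpose_mulVec, smul_dotProduct, smul_eq_mul, dotProduct_comm,
      show -r⁻¹ * ((A *ᵥ x) ⬝ᵥ y) = -((A *ᵥ x) ⬝ᵥ y) / r by ring, div_le_iff₀ hr]
    linarith
  · rw [dotProduct_smul, smul_eq_mul, show -r⁻¹ * (b ⬝ᵥ y) = -(b ⬝ᵥ y) / r by ring,
      lt_div_iff₀ hr]
    linarith

theorem exists_isMaxOn_dualUnitBall {x₀ : ι → ℝ} {b : κ → ℝ} (hx₀ : A *ᵥ x₀ = b)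
    (hne : ∃ y, Aᵀ *ᵥ y ∈ dualUnitBall f) :
    ∃ y ∈ {y | Aᵀ *ᵥ y ∈ dualUnitBall f},
      IsMaxOn (b ⬝ᵥ ·) {y | Aᵀ *ᵥ y ∈ dualUnitBall f} y := by
  have hZ : IsCompact (dualUnitBall f ∩ LinearMap.range Aᵀ.mulVecLin) :=
    (isCompact_dualUnitBall f).inter_right (Submodule.closed_of_finiteDimensional _)
  obtain ⟨y₀, hy₀⟩ := hne
  obtain ⟨_, ⟨hz, y, rfl⟩, hmax⟩ := hZ.exists_isMaxOn ⟨_, hy₀, y₀, rfl⟩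
    (continuous_const.dotProduct continuous_id).continuousOn (f := (x₀ ⬝ᵥ ·))
  refine ⟨y, hz, fun y' hy' => ?_⟩
  have := hmax ⟨hy', y', rfl⟩
  simp only [mulVecLin_apply, dotProduct_transpose_mulVec, hx₀, mem_ofPred_eq] at this ⊢
  rwa [dotProduct_comm b, dotProduct_comm b]

theorem exists_isLeast_isGreatest_dualUnitBall (hf : Continuous f)
    (hadd : ∀ x x', f (x + x') ≤ f x + f x') (hsmul : ∀ c : ℝ, 0 ≤ c → ∀ x, f (c • x) ≤ c * f x)
    (hbdd : ∀ T, IsBounded {x | f x ≤ T}) {b : κ → ℝ} (hb : ∃ x, A *ᵥ x = b) :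
    ∃ v : ℝ, IsLeast {c | ∃ x, A *ᵥ x = b ∧ f x = c} v ∧
      IsGreatest {c | ∃ y, Aᵀ *ᵥ y ∈ dualUnitBall f ∧ b ⬝ᵥ y = c} v := by
  obtain ⟨x₀, hx₀⟩ := hb
  obtain ⟨x, hx, hmin⟩ := exists_isMinOn_of_isBounded_sublevel hf hbdd
    (isClosed_eq A.mulVecLin.continuous_of_finiteDimensional continuous_const) ⟨x₀, hx₀⟩
  have hsep : ∀ t < f x, ∃ y, Aᵀ *ᵥ y ∈ dualUnitBall f ∧ t < b ⬝ᵥ y := fun t ht =>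
    exists_dualUnitBall_lt_dotProduct A hf hadd hsmul hbdd hx₀
      fun x' hx' => ht.trans_le (hmin hx')
  obtain ⟨y, hy, hmax⟩ := exists_isMaxOn_dualUnitBall A hx₀
    ((hsep (f x - 1) (by linarith)).imp fun _ => And.left)
  have hxy : b ⬝ᵥ y = f x := by
    refine le_antisymm (dotProduct_le_of_mulVec_eq A hx hy) (le_of_forall_lt fun t ht => ?_)
    obtain ⟨y', hy', hty'⟩ := hsep t ht
    exact hty'.trans_le (hmax hy')
  refine ⟨f x, ⟨⟨x, hx, rfl⟩, ?_⟩, ⟨⟨y, hy, hxy⟩, ?_⟩⟩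
  · rintro _ ⟨x', hx', rfl⟩
    exact hmin hx'
  · rintro _ ⟨y', hy', rfl⟩
    exact dotProduct_le_of_mulVec_eq A hx hy'

end GaugeDuality

section AsymmetricNorms

variable {d : Type*} [Fintype d]

theorem le_pnorm (v : d → ℝ) (i : d) : v i ≤ pnorm v :=
  (le_max_left _ _).trans <| Finset.single_le_sum (f := fun j => max (v j) 0)
    (fun _ _ => le_max_right _ _) (Finset.mem_univ i)

theorem pnorm_add_le (u v : d → ℝ) : pnorm (u + v) ≤ pnorm u + pnorm v := by
  rw [pnorm, pnorm, pnorm, ← Finset.sum_add_distrib]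
  exact Finset.sum_le_sum fun i _ =>
    max_le (add_le_add (le_max_left _ _) (le_max_left _ _)) (by positivity)

theorem pnorm_smul {c : ℝ} (hc : 0 ≤ c) (v : d → ℝ) : pnorm (c • v) = c * pnorm v := by
  simp only [pnorm, Finset.mul_sum, Pi.smul_apply, smul_eq_mul, mul_max_of_nonneg _ _ hc,
    mul_zero]

theorem continuous_pnorm : Continuous (pnorm : (d → ℝ) → ℝ) := by
  unfold pnorm
  fun_prop

end AsymmetricNorms

section WeightedMaps

variable {m : ℕ} {wp wm : Fin m → ℝ}

theorem Wstar_add (x x' : Fin m → ℝ) :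
    Wstar wp wm (x + x') = Wstar wp wm x + Wstar wp wm x' := by
  ext (e | e) <;> simp only [Wstar, Pi.add_apply, Sum.elim_inl, Sum.elim_inr] <;> ring

theorem Wstar_smul (c : ℝ) (x : Fin m → ℝ) : Wstar wp wm (c • x) = c • Wstar wp wm x := by
  ext (e | e) <;> simp only [Wstar, Pi.smul_apply, smul_eq_mul, Sum.elim_inl, Sum.elim_inr] <;> ring

theorem continuous_Wstar : Continuous (Wstar wp wm) :=
  continuous_pi fun i => by
    cases i <;> simp only [Wstar, Sum.elim_inl, Sum.elim_inr] <;> fun_prop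

theorem pnorm_Wstar (x : Fin m → ℝ) :
    pnorm (Wstar wp wm x) = ∑ e, (max (wp e * x e) 0 + max (-(wm e * x e)) 0) := by
  simp [pnorm, Wstar, Fintype.sum_sum_type, Finset.sum_add_distrib]

theorem isBounded_setOf_pnorm_Wstar_le (hwp : ∀ e, 0 < wp e) (hwm : ∀ e, 0 < wm e) (T : ℝ) :
    IsBounded {x | pnorm (Wstar wp wm x) ≤ T} := by
  refine forall_isBounded_image_eval_iff.1 fun e =>
    (Metric.isBounded_Icc (-(T / wm e)) (T / wp e)).subset ?_
  rintro _ ⟨x, hx, rfl⟩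
  have hpos : wp e * x e ≤ T := (le_pnorm _ (Sum.inl e)).trans hx
  have hneg : -(wm e * x e) ≤ T := (le_pnorm _ (Sum.inr e)).trans hx
  constructor
  · rw [neg_le, Function.eval, le_div_iff₀ (hwm e)]; linarith
  · rw [Function.eval, le_div_iff₀ (hwp e)]; linarith

theorem mem_dualUnitBall_pnorm_Wstar_iff (hwp : ∀ e, 0 ≤ wp e) (hwm : ∀ e, 0 ≤ wm e)
    (z : Fin m → ℝ) :
    z ∈ dualUnitBall (pnorm ∘ Wstar wp wm) ↔ ∀ e, -wm e ≤ z e ∧ z e ≤ wp e := by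
  classical
  constructor
  · intro hz e
    have hneg := hz (Pi.single e (-1))
    have hpos := hz (Pi.single e 1)
    simp only [single_dotProduct, Function.comp_apply, pnorm_Wstar] at hneg hpos
    rw [Finset.sum_eq_single e (by simp +contextual) (by simp)] at hneg hpos
    simp only [Pi.single_eq_same, neg_mul, one_mul, mul_neg, mul_one, neg_neg, hwp e, hwm e,
      Left.neg_nonpos_iff, sup_of_le_left, sup_of_le_right, zero_add, add_zero] at hneg hpos
    exact ⟨by linarith, hpos⟩
  · intro hz x
    rw [Function.comp_apply, pnorm_Wstar, dotProduct]
    refine Finset.sum_le_sum fun e _ => ?_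
    obtain ⟨hlo, hhi⟩ := hz e
    rcases le_total 0 (x e) with hx | hx
    · nlinarith [le_max_left (wp e * x e) 0, le_max_right (-(wm e * x e)) 0]
    · nlinarith [le_max_right (wp e * x e) 0, le_max_left (-(wm e * x e)) 0]

theorem qnorm_Rstar_le_one_iff (hwp : ∀ e, 0 < wp e) (hwm : ∀ e, 0 < wm e) (z : Fin m → ℝ) :
    qnorm (Rstar wp wm z) ≤ 1 ↔ ∀ e, -wm e ≤ z e ∧ z e ≤ wp e := by
  simp only [qnorm, Finset.fold_max_le, zero_le_one, Finset.mem_univ, forall_const, true_and,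
    Sum.forall, Rstar, Sum.elim_inl, Sum.elim_inr, ← neg_div, div_le_one (hwp _),
    div_le_one (hwm _), neg_le]
  exact ⟨fun h e => ⟨h.2 e, h.1 e⟩, fun h => ⟨fun e => (h e).2, fun e => (h e).1⟩⟩

end WeightedMaps

theorem asymmetric_transshipment_strong_duality_general {n m : ℕ}
    (A : Matrix (Fin n) (Fin m) ℝ) (wp wm : Fin m → ℝ)
    (hw : ∀ e, 0 < wm e ∧ wm e ≤ wp e)
    (b : Fin n → ℝ) (hb : ∃ x : Fin m → ℝ, A *ᵥ x = b) :
    ∃ v : ℝ,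
      IsLeast {c : ℝ | ∃ x : Fin m → ℝ, A *ᵥ x = b ∧ pnorm (Wstar wp wm x) = c} v ∧
      IsGreatest {c : ℝ | ∃ y : Fin n → ℝ,
        qnorm (Rstar wp wm (Aᵀ *ᵥ y)) ≤ 1 ∧ b ⬝ᵥ y = c} v := by
  have hwm e : 0 < wm e := (hw e).1
  have hwp e : 0 < wp e := (hw e).1.trans_le (hw e).2
  have hball (y : Fin n → ℝ) : qnorm (Rstar wp wm (Aᵀ *ᵥ y)) ≤ 1 ↔
      Aᵀ *ᵥ y ∈ dualUnitBall (pnorm ∘ Wstar wp wm) := by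
    rw [qnorm_Rstar_le_one_iff hwp hwm,
      mem_dualUnitBall_pnorm_Wstar_iff (fun e => (hwp e).le) (fun e => (hwm e).le)]
  simp_rw [hball]
  refine exists_isLeast_isGreatest_dualUnitBall A (continuous_pnorm.comp continuous_Wstar)
    (fun x x' => (congrArg pnorm (Wstar_add x x')).trans_le (pnorm_add_le _ _))
    (fun c hc x => ((congrArg pnorm (Wstar_smul c x)).trans (pnorm_smul hc _)).le)
    (isBounded_setOf_pnorm_Wstar_le hwp hwm) hb

/-- Strong duality for the asymmetric shortest transshipment LP:
`min{ p(W★x) : Ax = b } = max{ bᵀy : q(R★Aᵀy) ≤ 1 }`, both attained. -/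
theorem asymmetric_transshipment_strong_duality {n m : ℕ} (hn : 1 ≤ n) (hm : 1 ≤ m)
    (A : Matrix (Fin n) (Fin m) ℝ) (wp wm : Fin m → ℝ)
    (hw : ∀ e, 0 < wm e ∧ wm e ≤ wp e)
    (b : Fin n → ℝ) (hb : ∃ x : Fin m → ℝ, A *ᵥ x = b) :
    ∃ v : ℝ,
      IsLeast {c : ℝ | ∃ x : Fin m → ℝ, A *ᵥ x = b ∧ pnorm (Wstar wp wm x) = c} v ∧
      IsGreatest {c : ℝ | ∃ y : Fin n → ℝ,
        qnorm (Rstar wp wm (Aᵀ *ᵥ y)) ≤ 1 ∧ b ⬝ᵥ y = c} v :=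
  asymmetric_transshipment_strong_duality_general A wp wm hw b hb
end

section
/- Strong duality for the symmetric shortest transshipment LP: let W = diag(w) with w ∈ ℝᵐ entrywise positive, let A be a real n×m matrix, and let b ∈ ℝⁿ lie in the column space of A. Then the minimum min{ ‖Wx‖₁ : x ∈ ℝᵐ, Ax = b } and the maximum max{ bᵀy : y ∈ ℝⁿ, ‖W⁻¹Aᵀy‖_∞ ≤ 1 } are both attained and are equal. -/
/-!
Substituting `u = Wx` and `B = AW⁻¹` turns the claim into
`min {‖u‖₁ : Bu = b} = max {bᵀy : ‖Bᵀy‖_∞ ≤ 1}`. Write `b = Bu₀`. On the range of `Bᵀ` inside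
`ℓ^∞`, the functional `f : Bᵀy ↦ bᵀy = u₀ᵀBᵀy` is well defined. Its norm `v` is attained on the
unit ball by compactness, which gives a dual maximiser. By Hahn–Banach `f` extends with the same
norm to all of `ℓ^∞`, i.e. to some `z ↦ cᵀz` with `‖c‖₁ ≤ v`, and agreement on the range of `Bᵀ`
says `Bc = b`. Weak duality `bᵀy ≤ ‖u‖₁ ‖Bᵀy‖_∞` closes the gap.
-/

open Matrix BigOperators

section Norms

variable {d : Type*} [Fintype d]

lemma infnorm_eq_norm (v : d → ℝ) : infnorm v = ‖v‖ := by
  refine le_antisymm ((Finset.fold_max_le _).2 ⟨norm_nonneg v, fun i _ => norm_le_pi_norm v i⟩) ?_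
  refine (pi_norm_le_iff_of_nonneg ((Finset.le_fold_max _).2 (Or.inl le_rfl))).2 fun i => ?_
  exact (Finset.le_fold_max _).2 (Or.inr ⟨i, Finset.mem_univ i, le_rfl⟩)

lemma dotProduct_le_onenorm_mul_norm (u z : d → ℝ) : u ⬝ᵥ z ≤ onenorm u * ‖z‖ := by
  rw [onenorm, Finset.sum_mul]
  refine Finset.sum_le_sum fun i _ => ?_
  calc u i * z i ≤ |u i * z i| := le_abs_self _
    _ = |u i| * ‖z i‖ := abs_mul _ _
    _ ≤ |u i| * ‖z‖ := mul_le_mul_of_nonneg_left (norm_le_pi_norm z i) (abs_nonneg _)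

lemma dotProduct_sign_eq_onenorm (u : d → ℝ) :
    u ⬝ᵥ (fun i => (SignType.sign (u i) : ℝ)) = onenorm u := by
  simp [dotProduct, onenorm]

lemma norm_sign_le_one (u : d → ℝ) : ‖fun i => (SignType.sign (u i) : ℝ)‖ ≤ 1 := by
  refine (pi_norm_le_iff_of_nonneg zero_le_one).2 fun i => ?_
  rcases lt_trichotomy (u i) 0 with h | h | h <;> simp [h]

end Norms

lemma ContinuousLinearMap.exists_norm_le_one_apply_eq_opNorm {E : Type*} [NormedAddCommGroup E]
    [NormedSpace ℝ E] [ProperSpace E] (f : E →L[ℝ] ℝ) : ∃ z, ‖z‖ ≤ 1 ∧ f z = ‖f‖ := by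
  have hK : IsCompact ((fun x => ‖f x‖) '' Metric.closedBall 0 1) :=
    (isCompact_closedBall 0 1).image (by fun_prop)
  obtain ⟨z, hz, hfz⟩ := f.sSup_unitClosedBall_eq_norm ▸
    hK.sSup_mem ((Metric.nonempty_closedBall.2 zero_le_one).image _)
  rw [mem_closedBall_zero_iff] at hz
  rcases le_total 0 (f z) with h | h
  · exact ⟨z, hz, by simpa [Real.norm_of_nonneg h] using hfz⟩
  · exact ⟨-z, by rwa [norm_neg], by simpa [Real.norm_of_nonpos h] using hfz⟩

lemma ContinuousLinearMap.apply_eq_dotProduct {d : Type*} [Fintype d] [DecidableEq d]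
    (g : (d → ℝ) →L[ℝ] ℝ) (z : d → ℝ) :
    g z = (fun i => g (Pi.single i 1)) ⬝ᵥ z := by
  conv_lhs => rw [← Finset.univ_sum_single z]
  simp only [map_sum, dotProduct]
  refine Finset.sum_congr rfl fun i _ => ?_
  rw [mul_comm, ← smul_eq_mul, ← map_smul, ← Pi.single_smul', smul_eq_mul, mul_one]

lemma exists_dotProduct_eq_onenorm_le {d : Type*} [Fintype d] {V : Submodule ℝ (d → ℝ)}
    (f : V →L[ℝ] ℝ) : ∃ c : d → ℝ, (∀ z : V, f z = c ⬝ᵥ z) ∧ onenorm c ≤ ‖f‖ := by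
  classical
  obtain ⟨g, hgf, hg⟩ := exists_extension_norm_eq V f
  set c : d → ℝ := fun i => g (Pi.single i 1)
  refine ⟨c, fun z => by rw [← hgf, g.apply_eq_dotProduct], ?_⟩
  calc onenorm c = g (fun i => (SignType.sign (c i) : ℝ)) := by
        rw [g.apply_eq_dotProduct, dotProduct_sign_eq_onenorm]
    _ ≤ ‖g‖ := (le_abs_self _).trans (g.unit_le_opNorm _ (norm_sign_le_one c))
    _ = ‖f‖ := hg

section TransshipmentDuality

variable {ι κ : Type*} [Fintype ι] [Fintype κ] (B : Matrix ι κ ℝ)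

lemma dotProduct_le_onenorm_of_mulVec_eq {b : ι → ℝ} {u : κ → ℝ} {y : ι → ℝ}
    (hu : B *ᵥ u = b) (hy : ‖Bᵀ *ᵥ y‖ ≤ 1) : b ⬝ᵥ y ≤ onenorm u := by
  calc b ⬝ᵥ y = u ⬝ᵥ (Bᵀ *ᵥ y) := by rw [dotProduct_transpose_mulVec, hu, dotProduct_comm]
    _ ≤ onenorm u * ‖Bᵀ *ᵥ y‖ := dotProduct_le_onenorm_mul_norm _ _
    _ ≤ onenorm u := mul_le_of_le_one_right (Finset.sum_nonneg fun i _ => abs_nonneg _) hy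

theorem exists_isLeast_onenorm_isGreatest_dotProduct {b : ι → ℝ} (hb : ∃ u, B *ᵥ u = b) :
    ∃ v : ℝ, IsLeast {c | ∃ u, B *ᵥ u = b ∧ onenorm u = c} v ∧
      IsGreatest {c | ∃ y, ‖Bᵀ *ᵥ y‖ ≤ 1 ∧ b ⬝ᵥ y = c} v := by
  obtain ⟨u₀, rfl⟩ := hb
  set V := LinearMap.range Bᵀ.mulVecLin
  set f : V →L[ℝ] ℝ := LinearMap.toContinuousLinearMap (dotProductBilin ℝ ℝ u₀ ∘ₗ V.subtype)
  have hf : ∀ y, f ⟨Bᵀ *ᵥ y, y, rfl⟩ = (B *ᵥ u₀) ⬝ᵥ y := fun y =>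
    (dotProduct_transpose_mulVec B u₀ y).trans (dotProduct_comm _ _)
  obtain ⟨c, hfc, hc⟩ := exists_dotProduct_eq_onenorm_le f
  have hBc : B *ᵥ c = B *ᵥ u₀ := dotProduct_eq _ _ fun y => by
    rw [dotProduct_comm, ← dotProduct_transpose_mulVec, ← hf, hfc]
  obtain ⟨⟨_, y, rfl⟩, hy, hfy⟩ := f.exists_norm_le_one_apply_eq_opNorm
  have hby : (B *ᵥ u₀) ⬝ᵥ y = ‖f‖ := (hf y).symm.trans hfy
  have hc' : onenorm c = ‖f‖ :=
    le_antisymm hc (hby ▸ dotProduct_le_onenorm_of_mulVec_eq B hBc hy)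
  refine ⟨‖f‖, ⟨⟨c, hBc, hc'⟩, ?_⟩, ⟨⟨y, hy, hby⟩, ?_⟩⟩
  · rintro _ ⟨u, hu, rfl⟩
    exact hby ▸ dotProduct_le_onenorm_of_mulVec_eq B hu hy
  · rintro _ ⟨y', hy', rfl⟩
    exact hc' ▸ dotProduct_le_onenorm_of_mulVec_eq B hBc hy'

end TransshipmentDuality

lemma of_div_mulVec_mul {ι κ : Type*} [Fintype κ] (A : Matrix ι κ ℝ) {w : κ → ℝ}
    (hw : ∀ e, w e ≠ 0) (x : κ → ℝ) :
    (of fun i e => A i e / w e) *ᵥ (fun e => w e * x e) = A *ᵥ x := funext fun i => by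
  simp only [mulVec, dotProduct]
  exact Finset.sum_congr rfl fun e _ => by rw [of_apply]; field_simp [hw e]

lemma transpose_of_div_mulVec {ι κ : Type*} [Fintype ι] (A : Matrix ι κ ℝ) (w : κ → ℝ)
    (y : ι → ℝ) : (of fun i e => A i e / w e)ᵀ *ᵥ y = fun e => (Aᵀ *ᵥ y) e / w e :=
  funext fun e => by
    simp only [mulVec, dotProduct, Finset.sum_div]
    exact Finset.sum_congr rfl fun i _ => by simp [div_mul_eq_mul_div]

theorem symmetric_transshipment_strong_duality_general {n m : ℕ}
    (A : Matrix (Fin n) (Fin m) ℝ) (w : Fin m → ℝ) (hw : ∀ e, 0 < w e)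
    (b : Fin n → ℝ) (hb : ∃ x : Fin m → ℝ, A *ᵥ x = b) :
    ∃ v : ℝ,
      IsLeast {c : ℝ | ∃ x : Fin m → ℝ, A *ᵥ x = b ∧ onenorm (fun e => w e * x e) = c} v ∧
      IsGreatest {c : ℝ | ∃ y : Fin n → ℝ,
        infnorm (fun e => (Aᵀ *ᵥ y) e / w e) ≤ 1 ∧ b ⬝ᵥ y = c} v := by
  set B : Matrix (Fin n) (Fin m) ℝ := Matrix.of fun i e => A i e / w e
  have hB : ∀ x, B *ᵥ (fun e => w e * x e) = A *ᵥ x := of_div_mulVec_mul A fun e => (hw e).ne'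
  have hprimal : {c : ℝ | ∃ x, A *ᵥ x = b ∧ onenorm (fun e => w e * x e) = c} =
      {c | ∃ u, B *ᵥ u = b ∧ onenorm u = c} := by
    ext c
    constructor
    · rintro ⟨x, hx, rfl⟩
      exact ⟨_, (hB x).trans hx, rfl⟩
    · rintro ⟨u, hu, rfl⟩
      have hwu : (fun e => w e * (u e / w e)) = u := funext fun e => mul_div_cancel₀ _ (hw e).ne'
      exact ⟨fun e => u e / w e, by rw [← hB, hwu, hu], by rw [hwu]⟩
  obtain ⟨x₀, hx₀⟩ := hb
  simpa only [hprimal, infnorm_eq_norm, ← transpose_of_div_mulVec] using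
    exists_isLeast_onenorm_isGreatest_dotProduct B ⟨_, (hB x₀).trans hx₀⟩

/-- Strong duality for the symmetric shortest transshipment LP:
`min{ ‖Wx‖₁ : Ax = b } = max{ bᵀy : ‖W⁻¹Aᵀy‖_∞ ≤ 1 }`, both attained. -/
theorem symmetric_transshipment_strong_duality {n m : ℕ} (hn : 1 ≤ n) (hm : 1 ≤ m)
    (A : Matrix (Fin n) (Fin m) ℝ) (w : Fin m → ℝ) (hw : ∀ e, 0 < w e)
    (b : Fin n → ℝ) (hb : ∃ x : Fin m → ℝ, A *ᵥ x = b) :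
    ∃ v : ℝ,
      IsLeast {c : ℝ | ∃ x : Fin m → ℝ, A *ᵥ x = b ∧ onenorm (fun e => w e * x e) = c} v ∧
      IsGreatest {c : ℝ | ∃ y : Fin n → ℝ,
        infnorm (fun e => (Aᵀ *ᵥ y) e / w e) ≤ 1 ∧ b ⬝ᵥ y = c} v :=
  symmetric_transshipment_strong_duality_general A w hw b hb
end

section
/- Reduction from asymmetric to symmetric transshipment (Corollary 1.1): let b ∈ ℝⁿ, b ≠ 0, and let α ≥ 1. Suppose π̄* minimizes ‖W₋⁻¹Aᵀπ‖_∞ over { π ∈ ℝⁿ : bᵀπ = 1 }, and π* minimizes q(R★Aᵀπ) over the same set. If π̄ ∈ ℝⁿ satisfies bᵀπ̄ = 1 and ‖W₋⁻¹Aᵀπ̄‖_∞ ≤ α·‖W₋⁻¹Aᵀπ̄*‖_∞, then π̄ is feasible for the normalized asymmetric problem and q(R★Aᵀπ̄) ≤ α·λ·q(R★Aᵀπ*). -/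
/-! The two objectives are comparable entrywise: `q(R★x) ≤ ‖W₋⁻¹x‖_∞ ≤ λ·q(R★x)`. Hence
`q(R★Aᵀπ̄) ≤ α‖W₋⁻¹Aᵀπ̄*‖_∞ ≤ α‖W₋⁻¹Aᵀπ*‖_∞ ≤ αλ·q(R★Aᵀπ*)`, the middle step by the
optimality of `π̄*`. -/

open Matrix BigOperators

section FoldMax

variable {d : Type*} [Fintype d]

lemma qnorm_le_iff {v : d → ℝ} {c : ℝ} : qnorm v ≤ c ↔ 0 ≤ c ∧ ∀ i, v i ≤ c := by
  simp [qnorm, Finset.fold_max_le]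

lemma infnorm_le_iff {v : d → ℝ} {c : ℝ} : infnorm v ≤ c ↔ 0 ≤ c ∧ ∀ i, |v i| ≤ c := by
  simp [infnorm, Finset.fold_max_le]

lemma le_qnorm (v : d → ℝ) (i : d) : v i ≤ qnorm v :=
  (qnorm_le_iff.mp le_rfl).2 i

lemma le_infnorm (v : d → ℝ) (i : d) : |v i| ≤ infnorm v :=
  (infnorm_le_iff.mp le_rfl).2 i

lemma infnorm_nonneg (v : d → ℝ) : 0 ≤ infnorm v :=
  (infnorm_le_iff.mp le_rfl).1

end FoldMax

section Rstar

variable {m : ℕ} {wp wm : Fin m → ℝ}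

lemma qnorm_Rstar_le_infnorm (hw : ∀ e, 0 < wm e ∧ wm e ≤ wp e) (x : Fin m → ℝ) :
    qnorm (Rstar wp wm x) ≤ infnorm (fun e => x e / wm e) := by
  refine qnorm_le_iff.mpr ⟨infnorm_nonneg _, ?_⟩
  rintro (e | e)
  · obtain ⟨hwm, hle⟩ := hw e
    calc x e / wp e ≤ |x e| / wm e := div_le_div₀ (abs_nonneg _) (le_abs_self _) hwm hle
      _ = |x e / wm e| := by rw [abs_div, abs_of_pos hwm]
      _ ≤ _ := le_infnorm (fun e => x e / wm e) e
  · exact (neg_le_abs _).trans (le_infnorm (fun e => x e / wm e) e)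

/-- The upper entry of `R★x` bounds `xₑ` by `q·w⁺ₑ ≤ λ·q·w⁻ₑ`, the lower one bounds `-xₑ`
by `q·w⁻ₑ ≤ λ·q·w⁻ₑ`, since `λ ≥ w⁺ₑ/w⁻ₑ ≥ 1`. -/
lemma infnorm_le_iSup_mul_qnorm_Rstar (hw : ∀ e, 0 < wm e ∧ wm e ≤ wp e) (x : Fin m → ℝ) :
    infnorm (fun e => x e / wm e) ≤ (⨆ e, wp e / wm e) * qnorm (Rstar wp wm x) := by
  set lam := ⨆ e, wp e / wm e
  set q := qnorm (Rstar wp wm x)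
  have hq : 0 ≤ q := (qnorm_le_iff.mp le_rfl).1
  have hlam : 0 ≤ lam :=
    Real.iSup_nonneg fun e => div_nonneg ((hw e).1.le.trans (hw e).2) (hw e).1.le
  refine infnorm_le_iff.mpr ⟨mul_nonneg hlam hq, fun e => ?_⟩
  obtain ⟨hwm, hle⟩ := hw e
  have hwp : 0 < wp e := hwm.trans_le hle
  have hratio : wp e / wm e ≤ lam := le_ciSup (Set.finite_range fun e => wp e / wm e).bddAbove e
  have hlam_one : 1 ≤ lam := ((one_le_div hwm).mpr hle).trans hratio
  have hwp_le : wp e ≤ lam * wm e := (div_le_iff₀ hwm).mp hratio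
  have hupper : x e ≤ q * wp e := (div_le_iff₀ hwp).mp (le_qnorm (Rstar wp wm x) (Sum.inl e))
  have hlower : -x e ≤ q * wm e := by
    have := le_qnorm (Rstar wp wm x) (Sum.inr e)
    rwa [Rstar, Sum.elim_inr, ← neg_div, div_le_iff₀ hwm] at this
  rw [abs_div, abs_of_pos hwm, div_le_iff₀ hwm, abs_le]
  constructor <;> nlinarith [mul_le_mul_of_nonneg_left hwp_le hq]

end Rstar

theorem symmetric_to_asymmetric_reduction_general {n m : ℕ}
    (A : Matrix (Fin n) (Fin m) ℝ) (wp wm : Fin m → ℝ)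
    (hw : ∀ e, 0 < wm e ∧ wm e ≤ wp e)
    (b : Fin n → ℝ) (α : ℝ) (hα : 1 ≤ α)
    (πbarstar πstar πbar : Fin n → ℝ)
    (hbarstar_opt : ∀ π : Fin n → ℝ, b ⬝ᵥ π = 1 →
      infnorm (fun e => (Aᵀ *ᵥ πbarstar) e / wm e) ≤ infnorm (fun e => (Aᵀ *ᵥ π) e / wm e))
    (hstar_feas : b ⬝ᵥ πstar = 1)
    (hbar_feas : b ⬝ᵥ πbar = 1)
    (hbar_apx : infnorm (fun e => (Aᵀ *ᵥ πbar) e / wm e) ≤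
      α * infnorm (fun e => (Aᵀ *ᵥ πbarstar) e / wm e)) :
    b ⬝ᵥ πbar = 1 ∧
    qnorm (Rstar wp wm (Aᵀ *ᵥ πbar)) ≤
      α * (⨆ e : Fin m, wp e / wm e) * qnorm (Rstar wp wm (Aᵀ *ᵥ πstar)) := by
  have hα₀ : 0 ≤ α := zero_le_one.trans hα
  refine ⟨hbar_feas, ?_⟩
  calc qnorm (Rstar wp wm (Aᵀ *ᵥ πbar))
      ≤ infnorm (fun e => (Aᵀ *ᵥ πbar) e / wm e) := qnorm_Rstar_le_infnorm hw _
    _ ≤ α * infnorm (fun e => (Aᵀ *ᵥ πbarstar) e / wm e) := hbar_apx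
    _ ≤ α * infnorm (fun e => (Aᵀ *ᵥ πstar) e / wm e) := by
      gcongr
      exact hbarstar_opt πstar hstar_feas
    _ ≤ α * ((⨆ e, wp e / wm e) * qnorm (Rstar wp wm (Aᵀ *ᵥ πstar))) := by
      gcongr
      exact infnorm_le_iSup_mul_qnorm_Rstar hw _
    _ = α * (⨆ e, wp e / wm e) * qnorm (Rstar wp wm (Aᵀ *ᵥ πstar)) := (mul_assoc _ _ _).symm

/-- Reduction from asymmetric to symmetric transshipment (Corollary 1.1):
an `α`-approximate solution of the symmetrized problem
`min{ ‖W₋⁻¹Aᵀπ‖_∞ : bᵀπ = 1 }` is an `α·λ`-approximate solution of the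
normalized asymmetric problem `min{ q(R★Aᵀπ) : bᵀπ = 1 }`. -/
theorem symmetric_to_asymmetric_reduction {n m : ℕ} (hn : 1 ≤ n) (hm : 1 ≤ m)
    (A : Matrix (Fin n) (Fin m) ℝ) (wp wm : Fin m → ℝ)
    (hw : ∀ e, 0 < wm e ∧ wm e ≤ wp e)
    (b : Fin n → ℝ) (hb : b ≠ 0) (α : ℝ) (hα : 1 ≤ α)
    (πbarstar πstar πbar : Fin n → ℝ)
    (hbarstar_feas : b ⬝ᵥ πbarstar = 1)
    (hbarstar_opt : ∀ π : Fin n → ℝ, b ⬝ᵥ π = 1 →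
      infnorm (fun e => (Aᵀ *ᵥ πbarstar) e / wm e) ≤ infnorm (fun e => (Aᵀ *ᵥ π) e / wm e))
    (hstar_feas : b ⬝ᵥ πstar = 1)
    (hstar_opt : ∀ π : Fin n → ℝ, b ⬝ᵥ π = 1 →
      qnorm (Rstar wp wm (Aᵀ *ᵥ πstar)) ≤ qnorm (Rstar wp wm (Aᵀ *ᵥ π)))
    (hbar_feas : b ⬝ᵥ πbar = 1)
    (hbar_apx : infnorm (fun e => (Aᵀ *ᵥ πbar) e / wm e) ≤
      α * infnorm (fun e => (Aᵀ *ᵥ πbarstar) e / wm e)) :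
    b ⬝ᵥ πbar = 1 ∧
    qnorm (Rstar wp wm (Aᵀ *ᵥ πbar)) ≤
      α * (⨆ e : Fin m, wp e / wm e) * qnorm (Rstar wp wm (Aᵀ *ᵥ πstar)) :=
  symmetric_to_asymmetric_reduction_general A wp wm hw b α hα πbarstar πstar πbar hbarstar_opt
    hstar_feas hbar_feas hbar_apx
end

section
/- Multiplicative decrement of the potential (Corollary 1.3): assume 0 < ε ≤ 1/2 and β > 0 with ε·β·φ_β(π) ≤ 5·ln(2m), where b, π ∈ ℝⁿ satisfy bᵀπ = 1. Let h̃ ∈ ℝⁿ satisfy ‖W₋⁻¹Aᵀh̃‖_∞ ≤ 1, put P = I − πbᵀ and b̃ = Pᵀ∇φ_β(π), assume ‖R★AᵀPh̃‖_∞ > 0, and set δ := b̃ᵀh̃ / ‖R★AᵀPh̃‖_∞. Then φ_β( π − (δ/(2·β·‖R★AᵀPh̃‖_∞))·Ph̃ ) ≤ (1 − ε·δ²/(20·ln(2m)))·φ_β(π). -/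
open Matrix BigOperators

lemma abs_le_infnorm' {d : Type*} [Fintype d] (v : d → ℝ) (i : d) : |v i| ≤ infnorm v :=
  (Finset.le_fold_max _).mpr (Or.inr ⟨i, Finset.mem_univ i, le_rfl⟩)

lemma exp_le_one_add_add_sq' {x : ℝ} (h : |x| ≤ 1) : Real.exp x ≤ 1 + x + x ^ 2 := by
  have hb := Real.exp_bound h (n := 3) (by norm_num)
  have h1 : ∑ i ∈ Finset.range 3, x ^ i / i.factorial = 1 + x + x ^ 2 / 2 := by
    simp [Finset.sum_range_succ, Nat.factorial]
  rw [h1] at hb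
  have h2 : |x| ^ 3 ≤ x ^ 2 := by
    have h3 : |x| ^ 3 = x ^ 2 * |x| := by rw [pow_succ, sq_abs]
    rw [h3]; nlinarith [sq_nonneg x, abs_nonneg x]
  have hb2 := (abs_le.mp hb).2
  have h4 : (((3:ℕ).succ : ℝ) / ((3:ℕ).factorial * (3:ℕ))) = 2/9 := by
    norm_num [Nat.factorial]
  rw [h4] at hb2
  nlinarith

lemma gradLse_nonneg' {d : Type*} [Fintype d] (β : ℝ) (v : d → ℝ) (i : d) :
    0 ≤ gradLse β v i :=
  div_nonneg (Real.exp_pos _).le (Finset.sum_nonneg fun j _ => (Real.exp_pos _).le)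

lemma gradLse_sum_one' {d : Type*} [Fintype d] [Nonempty d] (β : ℝ) (v : d → ℝ) :
    ∑ i, gradLse β v i = 1 := by
  unfold gradLse
  rw [← Finset.sum_div]
  exact div_self (Finset.sum_pos (fun i _ => Real.exp_pos _) Finset.univ_nonempty).ne'

lemma gradLse_dot_le' {d : Type*} [Fintype d] [Nonempty d] (β c : ℝ) (v u : d → ℝ)
    (hc : ∀ i, |u i| ≤ c) : |∑ i, gradLse β v i * u i| ≤ c := by
  calc |∑ i, gradLse β v i * u i| ≤ ∑ i, |gradLse β v i * u i| :=
        Finset.abs_sum_le_sum_abs _ _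
    _ ≤ ∑ i, gradLse β v i * c := by
        apply Finset.sum_le_sum; intro i _
        rw [abs_mul, abs_of_nonneg (gradLse_nonneg' β v i)]
        exact mul_le_mul_of_nonneg_left (hc i) (gradLse_nonneg' β v i)
    _ = c := by rw [← Finset.sum_mul, gradLse_sum_one' β v, one_mul]

lemma lse_smooth' {d : Type*} [Fintype d] [Nonempty d] {β : ℝ} (hβ : 0 < β) (v u : d → ℝ)
    (c : ℝ) (hc : ∀ i, |u i| ≤ c) (hc1 : β * c ≤ 1) :
    lse β (fun i => v i + u i) ≤ lse β v + (∑ i, gradLse β v i * u i) + β * c ^ 2 := by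
  have hcnn : 0 ≤ c := le_trans (abs_nonneg _) (hc (Classical.arbitrary d))
  set S := ∑ i, Real.exp (β * v i) with hS
  have hSpos : 0 < S := Finset.sum_pos (fun i _ => Real.exp_pos _) Finset.univ_nonempty
  set D := ∑ i, gradLse β v i * u i with hD
  have hbound : ∀ i, Real.exp (β * (v i + u i)) ≤
      Real.exp (β * v i) * (1 + β * u i + (β * u i) ^ 2) := by
    intro i
    have h1 : |β * u i| ≤ 1 := by
      rw [abs_mul, abs_of_pos hβ]
      calc β * |u i| ≤ β * c := mul_le_mul_of_nonneg_left (hc i) hβ.le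
        _ ≤ 1 := hc1
    have h3 : Real.exp (β * (v i + u i)) = Real.exp (β * v i) * Real.exp (β * u i) := by
      rw [← Real.exp_add]; ring_nf
    rw [h3]
    exact mul_le_mul_of_nonneg_left (exp_le_one_add_add_sq' h1) (Real.exp_pos _).le
  have hsum : ∑ i, Real.exp (β * (v i + u i)) ≤ S * (1 + β * D + β ^ 2 * c ^ 2) := by
    calc ∑ i, Real.exp (β * (v i + u i))
        ≤ ∑ i, Real.exp (β * v i) * (1 + β * u i + (β * u i) ^ 2) :=
          Finset.sum_le_sum fun i _ => hbound i
      _ ≤ ∑ i, (Real.exp (β * v i) + β * (Real.exp (β * v i) * u i)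
            + β ^ 2 * c ^ 2 * Real.exp (β * v i)) := by
          apply Finset.sum_le_sum; intro i _
          have h5 : (u i) ^ 2 ≤ c ^ 2 := sq_le_sq' (neg_le_of_abs_le (hc i)) (le_of_abs_le (hc i))
          have h6 := (Real.exp_pos (β * v i)).le
          nlinarith [sq_nonneg β, mul_le_mul_of_nonneg_left h5 (mul_nonneg (sq_nonneg β) h6)]
      _ = S + β * (∑ i, Real.exp (β * v i) * u i) + β ^ 2 * c ^ 2 * S := by
          rw [Finset.sum_add_distrib, Finset.sum_add_distrib, ← Finset.mul_sum, ← Finset.mul_sum]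
      _ = S * (1 + β * D + β ^ 2 * c ^ 2) := by
          have h7 : ∑ i, Real.exp (β * v i) * u i = S * D := by
            rw [hD, Finset.mul_sum]
            apply Finset.sum_congr rfl; intro i _
            unfold gradLse
            rw [← hS]
            field_simp
          rw [h7]; ring
  have hK : 0 < 1 + β * D + β ^ 2 * c ^ 2 := by
    have h8 : |D| ≤ c := gradLse_dot_le' β c v u hc
    have h9 : -(β * c) ≤ β * D := by
      have := neg_le_of_abs_le h8
      nlinarith
    nlinarith [sq_nonneg (β * c - 1), sq_nonneg (β*c)]
  have hLpos : 0 < ∑ i, Real.exp (β * (v i + u i)) :=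
    Finset.sum_pos (fun i _ => Real.exp_pos _) Finset.univ_nonempty
  have hlog : Real.log (∑ i, Real.exp (β * (v i + u i))) ≤
      Real.log S + (β * D + β ^ 2 * c ^ 2) := by
    calc Real.log (∑ i, Real.exp (β * (v i + u i)))
        ≤ Real.log (S * (1 + β * D + β ^ 2 * c ^ 2)) := Real.log_le_log hLpos hsum
      _ = Real.log S + Real.log (1 + β * D + β ^ 2 * c ^ 2) := by
          rw [Real.log_mul hSpos.ne' hK.ne']
      _ ≤ Real.log S + (β * D + β ^ 2 * c ^ 2) := by
          have := Real.log_le_sub_one_of_pos hK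
          linarith
  unfold lse
  rw [← hS]
  have h10 : (1 / β) * (Real.log S + (β * D + β ^ 2 * c ^ 2)) =
      (1 / β) * Real.log S + D + β * c ^ 2 := by
    field_simp; ring
  calc (1 / β) * Real.log (∑ i, Real.exp (β * (v i + u i)))
      ≤ (1 / β) * (Real.log S + (β * D + β ^ 2 * c ^ 2)) := by
        apply mul_le_mul_of_nonneg_left hlog (by positivity)
    _ = (1 / β) * Real.log S + D + β * c ^ 2 := h10

lemma pairing' {n m : ℕ} (A : Matrix (Fin n) (Fin m) ℝ) (wp wm : Fin m → ℝ)
    (g : Fin m ⊕ Fin m → ℝ) (x : Fin n → ℝ) :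
    (A *ᵥ RstarT wp wm g) ⬝ᵥ x = ∑ i, g i * Rstar wp wm (Aᵀ *ᵥ x) i := by
  rw [Fintype.sum_sum_type]
  simp only [Rstar, RstarT, Sum.elim_inl, Sum.elim_inr, dotProduct, Matrix.mulVec,
    Matrix.transpose_apply]
  rw [← Finset.sum_add_distrib]
  have hL : ∀ i : Fin n,
      (∑ e, A i e * (g (Sum.inl e) / wp e - g (Sum.inr e) / wm e)) * x i
      = ∑ e, (A i e * (g (Sum.inl e) / wp e - g (Sum.inr e) / wm e)) * x i := by
    intro i; rw [Finset.sum_mul]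
  calc ∑ i, (∑ e, A i e * (g (Sum.inl e) / wp e - g (Sum.inr e) / wm e)) * x i
      = ∑ i, ∑ e, (A i e * (g (Sum.inl e) / wp e - g (Sum.inr e) / wm e)) * x i :=
        Finset.sum_congr rfl fun i _ => hL i
    _ = ∑ e, ∑ i, (A i e * (g (Sum.inl e) / wp e - g (Sum.inr e) / wm e)) * x i :=
        Finset.sum_comm
    _ = ∑ e, (g (Sum.inl e) * ((∑ i, A i e * x i) / wp e)
          + g (Sum.inr e) * -((∑ i, A i e * x i) / wm e)) := by
        apply Finset.sum_congr rfl; intro e _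
        have hr : g (Sum.inl e) * ((∑ i, A i e * x i) / wp e)
            + g (Sum.inr e) * -((∑ i, A i e * x i) / wm e)
            = (g (Sum.inl e) / wp e - g (Sum.inr e) / wm e) * ∑ i, A i e * x i := by ring
        rw [hr, Finset.mul_sum]
        exact Finset.sum_congr rfl fun i _ => by ring

lemma rstar_lin' {n m : ℕ} (A : Matrix (Fin n) (Fin m) ℝ) (wp wm : Fin m → ℝ)
    (x y : Fin n → ℝ) (t : ℝ) (j : Fin m ⊕ Fin m) :
    Rstar wp wm (Aᵀ *ᵥ fun i => x i - t * y i) j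
      = Rstar wp wm (Aᵀ *ᵥ x) j + -(t * Rstar wp wm (Aᵀ *ᵥ y) j) := by
  have hmv : ∀ e, (Aᵀ *ᵥ fun i => x i - t * y i) e = (Aᵀ *ᵥ x) e - t * (Aᵀ *ᵥ y) e := by
    intro e
    simp only [Matrix.mulVec, dotProduct, mul_sub, Finset.sum_sub_distrib]
    congr 1
    rw [Finset.mul_sum]
    exact Finset.sum_congr rfl fun i _ => by ring
  cases j with
  | inl e => simp only [Rstar, Sum.elim_inl, hmv e]; ring
  | inr e => simp only [Rstar, Sum.elim_inr, hmv e]; ring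

lemma dot_shift' {n : ℕ} (g b h π : Fin n → ℝ) :
    (fun i => g i - b i * (π ⬝ᵥ g)) ⬝ᵥ h = g ⬝ᵥ (fun i => h i - π i * (b ⬝ᵥ h)) := by
  simp only [dotProduct, sub_mul, mul_sub, Finset.sum_sub_distrib]
  congr 1
  have h1 : ∑ i, b i * (∑ j, π j * g j) * h i = (∑ j, π j * g j) * (∑ i, b i * h i) := by
    rw [Finset.mul_sum]; exact Finset.sum_congr rfl fun i _ => by ring
  have h2 : ∑ i, g i * (π i * ∑ j, b j * h j) = (∑ j, b j * h j) * (∑ i, π i * g i) := by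
    rw [Finset.mul_sum]; exact Finset.sum_congr rfl fun i _ => by ring
  rw [h1, h2]
  ring

lemma pot_nonneg' {n m : ℕ} (hm : 1 ≤ m) (A : Matrix (Fin n) (Fin m) ℝ) (wp wm : Fin m → ℝ)
    (hwp : ∀ e, 0 < wp e) (hwm : ∀ e, 0 < wm e) {β : ℝ} (hβ : 0 < β) (π : Fin n → ℝ) :
    0 ≤ pot A wp wm β π := by
  unfold pot lse
  apply mul_nonneg (by positivity)
  apply Real.log_nonneg
  have key : ∀ e : Fin m, (1:ℝ) ≤ Real.exp (β * Rstar wp wm (Aᵀ *ᵥ π) (Sum.inl e))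
      + Real.exp (β * Rstar wp wm (Aᵀ *ᵥ π) (Sum.inr e)) := by
    intro e
    simp only [Rstar, Sum.elim_inl, Sum.elim_inr]
    rcases le_or_gt 0 ((Aᵀ *ᵥ π) e) with h | h
    · have h1 : (0:ℝ) ≤ β * ((Aᵀ *ᵥ π) e / wp e) :=
        mul_nonneg hβ.le (div_nonneg h (hwp e).le)
      have h2 : (1:ℝ) ≤ Real.exp (β * ((Aᵀ *ᵥ π) e / wp e)) := by
        rw [← Real.exp_zero]; exact Real.exp_le_exp.mpr h1
      linarith [(Real.exp_pos (β * -((Aᵀ *ᵥ π) e / wm e))).le]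
    · have h1 : (0:ℝ) ≤ β * -((Aᵀ *ᵥ π) e / wm e) := by
        apply mul_nonneg hβ.le
        rw [neg_nonneg]
        exact (div_nonpos_iff.mpr (Or.inr ⟨h.le, (hwm e).le⟩))
      have h2 : (1:ℝ) ≤ Real.exp (β * -((Aᵀ *ᵥ π) e / wm e)) := by
        rw [← Real.exp_zero]; exact Real.exp_le_exp.mpr h1
      linarith [(Real.exp_pos (β * ((Aᵀ *ᵥ π) e / wp e))).le]
  calc (1:ℝ) ≤ (m:ℝ) := by exact_mod_cast hm
    _ = ∑ _e : Fin m, (1:ℝ) := by simp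
    _ ≤ ∑ e : Fin m, (Real.exp (β * Rstar wp wm (Aᵀ *ᵥ π) (Sum.inl e))
          + Real.exp (β * Rstar wp wm (Aᵀ *ᵥ π) (Sum.inr e))) :=
        Finset.sum_le_sum fun e _ => key e
    _ = ∑ i, Real.exp (β * Rstar wp wm (Aᵀ *ᵥ π) i) := by
        rw [Fintype.sum_sum_type, ← Finset.sum_add_distrib]


/-- Multiplicative decrement of the potential (Corollary 1.3). -/
theorem potential_multiplicative_decrement {n m : ℕ} (hn : 1 ≤ n) (hm : 1 ≤ m)
    (A : Matrix (Fin n) (Fin m) ℝ) (wp wm : Fin m → ℝ)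
    (hw : ∀ e, 0 < wm e ∧ wm e ≤ wp e)
    (ε β : ℝ) (hε : 0 < ε) (hε' : ε ≤ 1 / 2) (hβ : 0 < β)
    (b π : Fin n → ℝ) (hbπ : b ⬝ᵥ π = 1)
    (hpot : ε * β * pot A wp wm β π ≤ 5 * Real.log (2 * (m : ℝ)))
    (htilde : Fin n → ℝ)
    (hhfeas : infnorm (fun e => (Aᵀ *ᵥ htilde) e / wm e) ≤ 1)
    -- `b̃ = Pᵀ∇φ_β(π)` and `Ph̃`, where `P = I − πbᵀ`
    (btilde : Fin n → ℝ)
    (hbtilde : btilde = fun i =>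
      gradPot A wp wm β π i - b i * (π ⬝ᵥ gradPot A wp wm β π))
    (Ph : Fin n → ℝ) (hPh : Ph = fun i => htilde i - π i * (b ⬝ᵥ htilde))
    (N : ℝ) (hN : N = infnorm (Rstar wp wm (Aᵀ *ᵥ Ph))) (hNpos : 0 < N)
    (δ : ℝ) (hδ : δ = (btilde ⬝ᵥ htilde) / N) :
    pot A wp wm β (fun i => π i - δ / (2 * β * N) * Ph i) ≤
      (1 - ε * δ ^ 2 / (20 * Real.log (2 * (m : ℝ)))) * pot A wp wm β π := by
  have hwm : ∀ e, 0 < wm e := fun e => (hw e).1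
  have hwp : ∀ e, 0 < wp e := fun e => lt_of_lt_of_le (hw e).1 (hw e).2
  have hne : Nonempty (Fin m) := ⟨⟨0, hm⟩⟩
  have hne2 : Nonempty (Fin m ⊕ Fin m) := ⟨Sum.inl (Classical.arbitrary _)⟩
  set v : Fin m ⊕ Fin m → ℝ := Rstar wp wm (Aᵀ *ᵥ π) with hv
  set z : Fin m ⊕ Fin m → ℝ := Rstar wp wm (Aᵀ *ᵥ Ph) with hz
  have hzN : ∀ i, |z i| ≤ N := fun i => hN ▸ abs_le_infnorm' z i
  -- `btilde ⬝ᵥ htilde = gradPot ⬝ᵥ Ph`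
  have hBH : btilde ⬝ᵥ htilde = ∑ i, gradLse β v i * z i := by
    have e1 : btilde ⬝ᵥ htilde = gradPot A wp wm β π ⬝ᵥ Ph := by
      rw [hbtilde, hPh]
      exact dot_shift' (gradPot A wp wm β π) b htilde π
    rw [e1]
    unfold gradPot
    rw [← hv, pairing', ← hz]
  have hδN : btilde ⬝ᵥ htilde = δ * N := by
    rw [hδ]; field_simp
  have habsδ : |δ| ≤ 1 := by
    have h1 : |δ * N| ≤ N := by
      rw [← hδN, hBH]
      exact gradLse_dot_le' β N v z hzN
    rw [abs_mul, abs_of_pos hNpos] at h1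
    nlinarith
  -- smoothness application
  set t := δ / (2 * β * N) with ht
  have hvec : Rstar wp wm (Aᵀ *ᵥ fun i => π i - t * Ph i) = fun j => v j + -(t * z j) := by
    funext j
    rw [rstar_lin' A wp wm π Ph t j, ← hv, ← hz]
  have hc : ∀ j, |-(t * z j)| ≤ |δ| / (2 * β) := by
    intro j
    rw [abs_neg, abs_mul]
    have h1 : |t| = |δ| / (2 * β * N) := by
      rw [ht, abs_div, abs_of_pos (by positivity : (0:ℝ) < 2 * β * N)]
    rw [h1]
    rw [div_mul_eq_mul_div, div_le_div_iff₀ (by positivity) (by positivity)]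
    calc |δ| * |z j| * (2 * β) ≤ |δ| * N * (2 * β) :=
          mul_le_mul_of_nonneg_right
            (mul_le_mul_of_nonneg_left (hzN j) (abs_nonneg δ))
            (by positivity)
      _ = |δ| * (2 * β * N) := by ring
  have hc1 : β * (|δ| / (2 * β)) ≤ 1 := by
    rw [mul_div_assoc']
    rw [div_le_one (by positivity)]
    nlinarith
  have hsmooth := lse_smooth' hβ v (fun j => -(t * z j)) (|δ| / (2 * β)) hc hc1
  -- identify the pieces
  have hpu : ∑ i, gradLse β v i * -(t * z i) = -(δ ^ 2 / (2 * β)) := by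
    have h1 : ∑ i, gradLse β v i * -(t * z i) = -t * ∑ i, gradLse β v i * z i := by
      rw [Finset.mul_sum]; exact Finset.sum_congr rfl fun i _ => by ring
    rw [h1, ← hBH, hδN, ht]
    field_simp
  have hbc : β * (|δ| / (2 * β)) ^ 2 = δ ^ 2 / (4 * β) := by
    rw [div_pow, sq_abs]
    field_simp
    ring
  rw [hpu, hbc] at hsmooth
  have hpot' : pot A wp wm β (fun i => π i - t * Ph i) ≤
      pot A wp wm β π - δ ^ 2 / (4 * β) := by
    unfold pot
    rw [hvec, ← hv]
    calc lse β (fun j => v j + -(t * z j))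
        ≤ lse β v + -(δ ^ 2 / (2 * β)) + δ ^ 2 / (4 * β) := hsmooth
      _ = lse β v - δ ^ 2 / (4 * β) := by ring
  -- final arithmetic
  have hΦ : 0 ≤ pot A wp wm β π := pot_nonneg' hm A wp wm hwp hwm hβ π
  have hL : 0 < Real.log (2 * (m : ℝ)) := by
    apply Real.log_pos
    have : (1:ℝ) ≤ (m:ℝ) := by exact_mod_cast hm
    linarith
  set Φ := pot A wp wm β π with hΦdef
  set L := Real.log (2 * (m : ℝ)) with hLdef
  have key : ε * δ ^ 2 / (20 * L) * Φ ≤ δ ^ 2 / (4 * β) := by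
    rw [div_mul_eq_mul_div, div_le_div_iff₀ (by positivity) (by positivity)]
    nlinarith [mul_le_mul_of_nonneg_left hpot (sq_nonneg δ), sq_nonneg δ, hL.le, hβ.le]
  calc pot A wp wm β (fun i => π i - t * Ph i) ≤ Φ - δ ^ 2 / (4 * β) := hpot'
    _ ≤ Φ - ε * δ ^ 2 / (20 * L) * Φ := by linarith
    _ = (1 - ε * δ ^ 2 / (20 * L)) * Φ := by ring
end

section
/- Spanner lemma for the dual problem (Lemma 2.1): let G' = (V, E') with E' ⊆ E be a subgraph of G that α-approximates G for some α ≥ 1, with incidence matrix A' and weight matrix W' (the restrictions of A and W to the columns/indices in E'). Let q̃ ∈ ℝ^V, and let h' ∈ ℝ^V be an optimal solution of max{ q̃ᵀh : ‖(W')⁻¹(A')ᵀh‖_∞ ≤ 1 }, i.e. ‖(W')⁻¹(A')ᵀh'‖_∞ ≤ 1 and q̃ᵀh' ≥ q̃ᵀh for every h with ‖(W')⁻¹(A')ᵀh‖_∞ ≤ 1. Set ĥ := h'/α. Then ‖W⁻¹Aᵀĥ‖_∞ ≤ 1, and α·q̃ᵀĥ ≥ q̃ᵀh for every h ∈ ℝ^V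 with ‖W⁻¹Aᵀh‖_∞ ≤ 1. -/
open Matrix BigOperators

/-- Node-arc incidence matrix of the graph with oriented edge set `E`:
entry `1` at the head of an edge, `-1` at its tail, `0` elsewhere. -/
noncomputable def incMat {V : Type*} [Fintype V] [DecidableEq V] (E : Finset (V × V)) :
    Matrix V ↥E ℝ :=
  fun v e => (if v = (e : V × V).2 then 1 else 0) - (if v = (e : V × V).1 then 1 else 0)

/-- A step from `a` to `b` traverses an edge of `E'` in either direction. -/
def stepOK {V : Type*} (E' : Finset (V × V)) (a b : V) : Prop :=
  (a, b) ∈ E' ∨ (b, a) ∈ E'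

/-- Cost of traversing, from `a` to `b`, an edge of `E'` (in either direction). -/
noncomputable def stepCost {V : Type*} [DecidableEq V] (E' : Finset (V × V)) (w : V × V → ℝ)
    (a b : V) : ℝ :=
  if (a, b) ∈ E' then w (a, b) else w (b, a)

/-- `E'` α-approximates `E`: for every edge `e = (u,v) ∈ E` there is a walk from `u` to `v`
using edges of `E'` (traversed in either direction) of total weight at most `α·w(e)`. -/
def ApproximatesBy {V : Type*} [DecidableEq V] (E E' : Finset (V × V)) (w : V × V → ℝ)
    (α : ℝ) : Prop :=
  ∀ e ∈ E, ∃ l : List V,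
    List.Chain (stepOK E') e.1 l ∧
    (e.1 :: l).getLast (List.cons_ne_nil _ _) = e.2 ∧
    (((e.1 :: l).zip l).map fun p => stepCost E' w p.1 p.2).sum ≤ α * w e

lemma mulVec_incMat {V : Type*} [Fintype V] [DecidableEq V] (E : Finset (V × V))
    (h : V → ℝ) (e : ↥E) :
    ((incMat E)ᵀ *ᵥ h) e = h (e : V × V).2 - h (e : V × V).1 := by
  simp [Matrix.mulVec, dotProduct, incMat, Matrix.transpose, sub_mul,
    Finset.sum_sub_distrib, ite_mul]

lemma infnorm_le_one_iff {d : Type*} [Fintype d] (v : d → ℝ) :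
    infnorm v ≤ 1 ↔ ∀ i, |v i| ≤ 1 := by
  unfold infnorm
  rw [Finset.fold_max_le]
  simp

lemma walk_bound {V : Type*} [DecidableEq V] (E' : Finset (V × V)) (w : V × V → ℝ)
    (h' : V → ℝ)
    (hstep : ∀ a b, stepOK E' a b → |h' b - h' a| ≤ stepCost E' w a b) :
    ∀ (l : List V) (u : V), List.Chain (stepOK E') u l →
      |h' ((u :: l).getLast (List.cons_ne_nil _ _)) - h' u| ≤
        (((u :: l).zip l).map fun p => stepCost E' w p.1 p.2).sum := by
  intro l
  induction l with
  | nil => intro u _; simp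
  | cons b t ih =>
    intro u hc
    rcases List.chain_cons.mp hc with ⟨hub, hbt⟩
    have hih := ih b hbt
    have hstep' := hstep u b hub
    simp only [List.zip_cons_cons, List.map_cons, List.sum_cons]
    have hlast : ((u :: b :: t).getLast (List.cons_ne_nil _ _)) =
        ((b :: t).getLast (List.cons_ne_nil _ _)) := by
      simp [List.getLast_cons]
    rw [hlast]
    calc |h' ((b :: t).getLast (List.cons_ne_nil _ _)) - h' u|
        ≤ |h' ((b :: t).getLast (List.cons_ne_nil _ _)) - h' b| + |h' b - h' u| :=
          abs_sub_le _ _ _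
      _ ≤ _ := by linarith

/-- Spanner lemma for the dual problem (Lemma 2.1): if `h'` is optimal for
`max{ q̃ᵀh : ‖(W')⁻¹(A')ᵀh‖_∞ ≤ 1 }` on the α-approximating subgraph `G' = (V, E')`,
then `ĥ := h'/α` is feasible for the corresponding problem on `G` and
`α·q̃ᵀĥ ≥ max{ q̃ᵀh : ‖W⁻¹Aᵀh‖_∞ ≤ 1 }`. -/
theorem spanner_dual_lemma {V : Type*} [Fintype V] [DecidableEq V]
    (E E' : Finset (V × V)) (hE' : E' ⊆ E)
    (w : V × V → ℝ) (hw : ∀ e ∈ E, 0 < w e)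
    (α : ℝ) (hα : 1 ≤ α) (happrox : ApproximatesBy E E' w α)
    (qt h' : V → ℝ)
    (hfeas : infnorm (fun e : ↥E' => ((incMat E')ᵀ *ᵥ h') e / w ↑e) ≤ 1)
    (hopt : ∀ h : V → ℝ,
      infnorm (fun e : ↥E' => ((incMat E')ᵀ *ᵥ h) e / w ↑e) ≤ 1 → qt ⬝ᵥ h ≤ qt ⬝ᵥ h') :
    infnorm (fun e : ↥E => ((incMat E)ᵀ *ᵥ (fun v => h' v / α)) e / w ↑e) ≤ 1 ∧
    ∀ h : V → ℝ, infnorm (fun e : ↥E => ((incMat E)ᵀ *ᵥ h) e / w ↑e) ≤ 1 →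
      qt ⬝ᵥ h ≤ α * (qt ⬝ᵥ (fun v => h' v / α)) := by
  have hαpos : (0:ℝ) < α := lt_of_lt_of_le one_pos hα
  have hw' : ∀ e ∈ E', 0 < w e := fun e he => hw e (hE' he)
  -- feasibility of h' on E' componentwise
  have hfeas' : ∀ e : ↥E', |h' (e : V × V).2 - h' (e : V × V).1| ≤ w ↑e := by
    intro e
    have := (infnorm_le_one_iff _).1 hfeas e
    rw [mulVec_incMat, abs_div, abs_of_pos (hw' _ e.2), div_le_one (hw' _ e.2)] at this
    exact this
  have hstep : ∀ a b, stepOK E' a b → |h' b - h' a| ≤ stepCost E' w a b := by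
    intro a b hab
    unfold stepCost
    by_cases hmem : (a, b) ∈ E'
    · simpa [hmem] using hfeas' ⟨(a, b), hmem⟩
    · rcases hab with h1 | h2
      · exact absurd h1 hmem
      · rw [abs_sub_comm]
        simpa [hmem] using hfeas' ⟨(b, a), h2⟩
  -- key bound on E
  have hkey : ∀ e ∈ E, |h' e.2 - h' e.1| ≤ α * w e := by
    intro e he
    rcases happrox e he with ⟨l, hc, hl, hs⟩
    have := walk_bound E' w h' hstep l e.1 hc
    rw [hl] at this
    linarith
  constructor
  · rw [infnorm_le_one_iff]
    intro e
    rw [mulVec_incMat]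
    have hwe := hw _ e.2
    have hk := hkey _ e.2
    have : h' (e : V × V).2 / α - h' (e : V × V).1 / α
        = (h' (e : V × V).2 - h' (e : V × V).1) / α := by ring
    rw [this, div_div, abs_div, abs_of_pos (mul_pos hαpos hwe),
      div_le_one (mul_pos hαpos hwe)]
    exact hk
  · intro h hfeasE
    have hfeasE' : infnorm (fun e : ↥E' => ((incMat E')ᵀ *ᵥ h) e / w ↑e) ≤ 1 := by
      rw [infnorm_le_one_iff]
      intro e
      have := (infnorm_le_one_iff _).1 hfeasE ⟨↑e, hE' e.2⟩
      rw [mulVec_incMat] at this ⊢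
      exact this
    have hle := hopt h hfeasE'
    have heq : α * (qt ⬝ᵥ (fun v => h' v / α)) = qt ⬝ᵥ h' := by
      simp only [dotProduct, Finset.mul_sum]
      congr 1
      ext v
      field_simp
    rw [heq]
    exact hle
end

section
/- Weak duality / generalized Hölder inequality for the asymmetric norms: for every x ∈ ℝᵐ and y ∈ ℝⁿ with Ax = b and q(R★Aᵀy) ≤ 1, it holds that bᵀy ≤ p(W★x). -/
open Matrix BigOperators

/-- Weak duality / generalized Hölder inequality for the asymmetric norms. -/
theorem asymmetric_weak_duality {n m : ℕ} (hn : 1 ≤ n) (hm : 1 ≤ m)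
    (A : Matrix (Fin n) (Fin m) ℝ) (wp wm : Fin m → ℝ)
    (hw : ∀ e, 0 < wm e ∧ wm e ≤ wp e)
    (b : Fin n → ℝ) (x : Fin m → ℝ) (y : Fin n → ℝ)
    (hx : A *ᵥ x = b) (hy : qnorm (Rstar wp wm (Aᵀ *ᵥ y)) ≤ 1) :
    b ⬝ᵥ y ≤ pnorm (Wstar wp wm x) := by
  set z := Aᵀ *ᵥ y with hzdef
  have hbound : ∀ g : Fin m ⊕ Fin m, Rstar wp wm z g ≤ 1 := by
    intro g
    have := (Finset.fold_max_le (1:ℝ)).mp (by simpa [qnorm] using hy)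
    exact this.2 g (Finset.mem_univ g)
  have hzle : ∀ e, z e ≤ wp e := by
    intro e
    have h1 := hbound (Sum.inl e)
    have hp : 0 < wp e := lt_of_lt_of_le (hw e).1 (hw e).2
    simp only [Rstar, Sum.elim_inl] at h1
    rw [div_le_one hp] at h1
    exact h1
  have hzge : ∀ e, -(wm e) ≤ z e := by
    intro e
    have h1 := hbound (Sum.inr e)
    have hp : 0 < wm e := (hw e).1
    simp only [Rstar, Sum.elim_inr] at h1
    have h2 : -1 ≤ z e / wm e := by linarith
    have h3 := (le_div_iff₀ hp).mp h2
    linarith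
  have hdot : b ⬝ᵥ y = x ⬝ᵥ z := by
    rw [← hx, hzdef]
    simp only [dotProduct, Matrix.mulVec, dotProduct, Matrix.transpose_apply,
      Finset.sum_mul, Finset.mul_sum]
    rw [Finset.sum_comm]
    apply Finset.sum_congr rfl
    intro i _
    apply Finset.sum_congr rfl
    intro j _
    ring
  rw [hdot]
  have hpsum : pnorm (Wstar wp wm x) =
      ∑ e, (max (wp e * x e) 0 + max (-(wm e * x e)) 0) := by
    simp [pnorm, Wstar, Fintype.sum_sum_type, Finset.sum_add_distrib]
  rw [hpsum]
  apply Finset.sum_le_sum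
  intro e _
  have h1 := hzle e
  have h2 := hzge e
  have hp : 0 < wm e := (hw e).1
  rcases le_total 0 (x e) with hxe | hxe
  · have : x e * z e ≤ wp e * x e := by nlinarith
    have := le_max_left (-(wm e * x e)) 0
    nlinarith [le_max_left (wp e * x e) 0, le_max_right (-(wm e * x e)) (0:ℝ)]
  · have : x e * z e ≤ -(wm e * x e) := by nlinarith
    nlinarith [le_max_left (-(wm e * x e)) (0:ℝ), le_max_right (wp e * x e) (0:ℝ)]
end

section
/- Feasibility of the gradient-induced flow: for every g ∈ ℝ²ᵐ with g ≥ 0 entrywise and Σᵢ gᵢ = 1, the vector x₁ := R★ᵀg ∈ ℝᵐ satisfies p(W★x₁) ≤ 1. In particular, for every β > 0 and π ∈ ℝⁿ, the vector x₁ := R★ᵀ∇lse_β(R★Aᵀπ) satisfies Ax₁ = ∇φ_β(π) and p(W★x₁) ≤ 1. -/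
open Matrix BigOperators

/-- Feasibility of the gradient-induced flow: for nonnegative `g` summing to `1`,
`x₁ := R★ᵀg` has `p(W★x₁) ≤ 1`; in particular `x₁ := R★ᵀ∇lse_β(R★Aᵀπ)` satisfies
`Ax₁ = ∇φ_β(π)` and `p(W★x₁) ≤ 1`. -/
theorem gradient_flow_feasibility {n m : ℕ} (hn : 1 ≤ n) (hm : 1 ≤ m)
    (A : Matrix (Fin n) (Fin m) ℝ) (wp wm : Fin m → ℝ)
    (hw : ∀ e, 0 < wm e ∧ wm e ≤ wp e) :
    (∀ g : Fin m ⊕ Fin m → ℝ, (∀ i, 0 ≤ g i) → ∑ i, g i = 1 →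
      pnorm (Wstar wp wm (RstarT wp wm g)) ≤ 1) ∧
    (∀ β : ℝ, 0 < β → ∀ π : Fin n → ℝ,
      A *ᵥ RstarT wp wm (gradLse β (Rstar wp wm (Aᵀ *ᵥ π))) = gradPot A wp wm β π ∧
      pnorm (Wstar wp wm (RstarT wp wm (gradLse β (Rstar wp wm (Aᵀ *ᵥ π))))) ≤ 1) := by
  have key : ∀ g : Fin m ⊕ Fin m → ℝ, (∀ i, 0 ≤ g i) → ∑ i, g i = 1 →
      pnorm (Wstar wp wm (RstarT wp wm g)) ≤ 1 := by
    intro g hg hsum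
    have hwp : ∀ e, 0 < wp e := fun e => lt_of_lt_of_le (hw e).1 (hw e).2
    have hwm : ∀ e, 0 < wm e := fun e => (hw e).1
    calc pnorm (Wstar wp wm (RstarT wp wm g))
        ≤ ∑ i, g i := by
          rw [pnorm, Fintype.sum_sum_type, Fintype.sum_sum_type]
          apply add_le_add <;> apply Finset.sum_le_sum <;> intro e _
          · simp only [Wstar, Sum.elim_inl, RstarT]
            rw [max_le_iff]
            constructor
            · have h1 : wp e * (g (Sum.inl e) / wp e - g (Sum.inr e) / wm e)
                  ≤ wp e * (g (Sum.inl e) / wp e) := by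
                apply mul_le_mul_of_nonneg_left _ (le_of_lt (hwp e))
                have : 0 ≤ g (Sum.inr e) / wm e := div_nonneg (hg _) (le_of_lt (hwm e))
                linarith
              calc wp e * (g (Sum.inl e) / wp e - g (Sum.inr e) / wm e)
                  ≤ wp e * (g (Sum.inl e) / wp e) := h1
                _ = g (Sum.inl e) := by rw [mul_comm, div_mul_cancel₀ _ (ne_of_gt (hwp e))]
            · exact hg _
          · simp only [Wstar, Sum.elim_inr, RstarT]
            rw [max_le_iff]
            constructor
            · have h1 : -(wm e * (g (Sum.inl e) / wp e - g (Sum.inr e) / wm e))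
                  = wm e * (g (Sum.inr e) / wm e) - wm e * (g (Sum.inl e) / wp e) := by ring
              have h2 : 0 ≤ wm e * (g (Sum.inl e) / wp e) :=
                mul_nonneg (le_of_lt (hwm e)) (div_nonneg (hg _) (le_of_lt (hwp e)))
              have h3 : wm e * (g (Sum.inr e) / wm e) = g (Sum.inr e) := by
                rw [mul_comm, div_mul_cancel₀ _ (ne_of_gt (hwm e))]
              rw [h1, h3]
              linarith
            · exact hg _
      _ = 1 := hsum
  refine ⟨key, fun β hβ π => ⟨rfl, ?_⟩⟩
  apply key
  · intro i
    exact div_nonneg (Real.exp_nonneg _) (Finset.sum_nonneg fun j _ => Real.exp_nonneg _)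
  · have hpos : 0 < ∑ j, Real.exp (β * Rstar wp wm (Aᵀ *ᵥ π) j) := by
      apply Finset.sum_pos (fun j _ => Real.exp_pos _)
      haveI : Nonempty (Fin m) := ⟨⟨0, hm⟩⟩
      exact Finset.univ_nonempty
    unfold gradLse
    rw [← Finset.sum_div, div_self (ne_of_gt hpos)]
end

section
/- Lower bound on the directional derivative at the iterate: assume 0 < ε ≤ 1/2 and β > 0, and let π ∈ ℝⁿ satisfy φ_β(π) ≥ 4·ln(4m)/(ε·β). Then πᵀ∇φ_β(π) ≥ (1 − ε/4)·φ_β(π) ≥ (1 − ε/4)·q(R★Aᵀπ) ≥ 0. -/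
open Matrix BigOperators

/-!
Write `v = R★Aᵀπ` and `p = ∇lse_β(v)`. Since `R★ᵀ` is the transpose of `R★`, the directional
derivative `πᵀ∇φ_β(π)` equals `⟨p, v⟩`. Gibbs' inequality between `p` and the uniform
distribution on the `2m` coordinates (i.e. `x - 1 ≤ x log x` at `x = 2m·pᵢ`) gives
`⟨p, v⟩ ≥ lse_β(v) - ln(2m)/β`, and the hypothesis on `φ_β(π)` makes `ln(2m)/β ≤ (ε/4)·φ_β(π)`.
For the other inequalities, `lse_β(v)` dominates every coordinate of `v`, and one of `±xₑ/w±ₑ`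
is nonnegative, so `0 ≤ q(v) ≤ φ_β(π)`.
-/

section Softmax

variable {ι : Type*} [Fintype ι]

lemma le_lse {β : ℝ} (hβ : 0 < β) (v : ι → ℝ) (i : ι) : v i ≤ lse β v := by
  have hexp : Real.exp (β * v i) ≤ ∑ j, Real.exp (β * v j) :=
    Finset.single_le_sum (f := fun j => Real.exp (β * v j)) (fun j _ => (Real.exp_pos _).le)
      (Finset.mem_univ i)
  have hlog : β * v i ≤ Real.log (∑ j, Real.exp (β * v j)) := by
    simpa using Real.log_le_log (Real.exp_pos _) hexp
  rw [lse, one_div, ← div_eq_inv_mul, le_div_iff₀ hβ]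
  linarith

lemma qnorm_nonneg (v : ι → ℝ) : 0 ≤ qnorm v :=
  (Finset.le_fold_max 0).mpr (Or.inl le_rfl)

lemma qnorm_le_lse {β : ℝ} (hβ : 0 < β) (v : ι → ℝ) (h : ∃ i, 0 ≤ v i) : qnorm v ≤ lse β v := by
  obtain ⟨i, hi⟩ := h
  exact (Finset.fold_max_le _).mpr ⟨hi.trans (le_lse hβ v i), fun j _ => le_lse hβ v j⟩

lemma log_sum_exp_sub_log_card_le [Nonempty ι] (β : ℝ) (v : ι → ℝ) :
    Real.log (∑ j, Real.exp (β * v j)) - Real.log (Fintype.card ι) ≤ β * (gradLse β v ⬝ᵥ v) := by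
  set S := ∑ j, Real.exp (β * v j)
  set d : ℝ := (Fintype.card ι : ℝ)
  have hS : 0 < S := Finset.sum_pos (fun _ _ => Real.exp_pos _) Finset.univ_nonempty
  have hd : 0 < d := by simpa [d] using Fintype.card_pos (α := ι)
  have hp : ∀ i, 0 < gradLse β v i := fun i => div_pos (Real.exp_pos _) hS
  have hsum : ∑ i, gradLse β v i = 1 := by
    simp only [gradLse]
    rw [← Finset.sum_div, div_self hS.ne']
  have hpoint : ∀ i, gradLse β v i - 1 / d ≤
      gradLse β v i * (Real.log d - Real.log S) + gradLse β v i * (β * v i) := by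
    intro i
    have hlog : Real.log (d * gradLse β v i) = Real.log d - Real.log S + β * v i := by
      rw [Real.log_mul hd.ne' (hp i).ne', gradLse, Real.log_div (Real.exp_ne_zero _) hS.ne',
        Real.log_exp]
      ring
    have h := Real.self_sub_one_le_mul_log (mul_pos hd (hp i)).le
    rw [hlog, mul_assoc, ← div_le_iff₀' hd] at h
    calc gradLse β v i - 1 / d = (d * gradLse β v i - 1) / d := by field_simp
      _ ≤ _ := h
      _ = _ := by ring
  have hlhs : ∑ i, (gradLse β v i - 1 / d) = 0 := by
    simp [Finset.sum_sub_distrib, hsum, d, hd.ne']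
  have hrhs : ∑ i, (gradLse β v i * (Real.log d - Real.log S) + gradLse β v i * (β * v i)) =
      Real.log d - Real.log S + β * (gradLse β v ⬝ᵥ v) := by
    simp only [Finset.sum_add_distrib, ← Finset.sum_mul, hsum, one_mul, dotProduct,
      Finset.mul_sum]
    congr 1
    exact Finset.sum_congr rfl fun i _ => by ring
  have := Finset.sum_le_sum fun i (_ : i ∈ Finset.univ) => hpoint i
  rw [hlhs, hrhs] at this
  linarith

lemma lse_sub_log_card_div_le [Nonempty ι] {β : ℝ} (hβ : 0 < β) (v : ι → ℝ) :
    lse β v - Real.log (Fintype.card ι) / β ≤ gradLse β v ⬝ᵥ v :=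
  calc lse β v - Real.log (Fintype.card ι) / β
      = (Real.log (∑ j, Real.exp (β * v j)) - Real.log (Fintype.card ι)) / β := by
        rw [lse]; ring
    _ ≤ β * (gradLse β v ⬝ᵥ v) / β := by
        gcongr; exact log_sum_exp_sub_log_card_le β v
    _ = gradLse β v ⬝ᵥ v := by field_simp

end Softmax

section Rstar

variable {m : ℕ} (wp wm : Fin m → ℝ)

lemma dotProduct_RstarT (x : Fin m → ℝ) (g : Fin m ⊕ Fin m → ℝ) :
    x ⬝ᵥ RstarT wp wm g = g ⬝ᵥ Rstar wp wm x := by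
  simp only [dotProduct, Fintype.sum_sum_type, RstarT, Rstar, Sum.elim_inl, Sum.elim_inr,
    ← Finset.sum_add_distrib]
  exact Finset.sum_congr rfl fun e _ => by ring

lemma exists_nonneg_Rstar {wp wm} (hwp : ∀ e, 0 ≤ wp e) (hwm : ∀ e, 0 ≤ wm e)
    (x : Fin m → ℝ) (e : Fin m) : ∃ i, 0 ≤ Rstar wp wm x i := by
  rcases le_total 0 (x e) with hx | hx
  · exact ⟨Sum.inl e, div_nonneg hx (hwp e)⟩
  · exact ⟨Sum.inr e, neg_nonneg.mpr (div_nonpos_of_nonpos_of_nonneg hx (hwm e))⟩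

lemma dotProduct_gradPot {n : ℕ} (A : Matrix (Fin n) (Fin m) ℝ) (β : ℝ) (π : Fin n → ℝ) :
    π ⬝ᵥ gradPot A wp wm β π =
      gradLse β (Rstar wp wm (Aᵀ *ᵥ π)) ⬝ᵥ Rstar wp wm (Aᵀ *ᵥ π) := by
  rw [gradPot, dotProduct_mulVec, ← mulVec_transpose, dotProduct_RstarT]

end Rstar

theorem directional_derivative_lower_bound_general {n m : ℕ} (hm : 1 ≤ m)
    (A : Matrix (Fin n) (Fin m) ℝ) (wp wm : Fin m → ℝ)
    (hw : ∀ e, 0 < wm e ∧ wm e ≤ wp e)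
    (ε β : ℝ) (hε : 0 < ε) (hε' : ε ≤ 1 / 2) (hβ : 0 < β)
    (π : Fin n → ℝ)
    (hpot : 4 * Real.log (4 * (m : ℝ)) / (ε * β) ≤ pot A wp wm β π) :
    (1 - ε / 4) * pot A wp wm β π ≤ π ⬝ᵥ gradPot A wp wm β π ∧
    (1 - ε / 4) * qnorm (Rstar wp wm (Aᵀ *ᵥ π)) ≤ (1 - ε / 4) * pot A wp wm β π ∧
    0 ≤ (1 - ε / 4) * qnorm (Rstar wp wm (Aᵀ *ᵥ π)) := by
  set v := Rstar wp wm (Aᵀ *ᵥ π)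
  have hε4 : 0 ≤ 1 - ε / 4 := by linarith
  have hq : qnorm v ≤ pot A wp wm β π := qnorm_le_lse hβ v <|
    exists_nonneg_Rstar (fun e => ((hw e).1.trans_le (hw e).2).le) (fun e => (hw e).1.le) _ ⟨0, hm⟩
  refine ⟨?_, mul_le_mul_of_nonneg_left hq hε4, mul_nonneg hε4 (qnorm_nonneg v)⟩
  have : Nonempty (Fin m ⊕ Fin m) := ⟨Sum.inl ⟨0, hm⟩⟩
  have hcard : Real.log (Fintype.card (Fin m ⊕ Fin m)) ≤ Real.log (4 * m) := by
    have : (1 : ℝ) ≤ m := by exact_mod_cast hm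
    rw [Fintype.card_sum, Fintype.card_fin, Nat.cast_add]
    exact Real.log_le_log (by positivity) (by linarith)
  have hpot' := (div_le_iff₀ (mul_pos hε hβ)).mp hpot
  have hslack : Real.log (Fintype.card (Fin m ⊕ Fin m)) / β ≤ ε / 4 * pot A wp wm β π := by
    rw [div_le_iff₀ hβ]
    linarith
  have hgibbs : pot A wp wm β π - Real.log (Fintype.card (Fin m ⊕ Fin m)) / β ≤
      π ⬝ᵥ gradPot A wp wm β π := by
    rw [dotProduct_gradPot]
    exact lse_sub_log_card_div_le hβ v
  linarith

/-- Lower bound on the directional derivative at the iterate: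
`πᵀ∇φ_β(π) ≥ (1 − ε/4)·φ_β(π) ≥ (1 − ε/4)·q(R★Aᵀπ) ≥ 0`. -/
theorem directional_derivative_lower_bound {n m : ℕ} (hn : 1 ≤ n) (hm : 1 ≤ m)
    (A : Matrix (Fin n) (Fin m) ℝ) (wp wm : Fin m → ℝ)
    (hw : ∀ e, 0 < wm e ∧ wm e ≤ wp e)
    (ε β : ℝ) (hε : 0 < ε) (hε' : ε ≤ 1 / 2) (hβ : 0 < β)
    (π : Fin n → ℝ)
    (hpot : 4 * Real.log (4 * (m : ℝ)) / (ε * β) ≤ pot A wp wm β π) :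
    (1 - ε / 4) * pot A wp wm β π ≤ π ⬝ᵥ gradPot A wp wm β π ∧
    (1 - ε / 4) * qnorm (Rstar wp wm (Aᵀ *ᵥ π)) ≤ (1 - ε / 4) * pot A wp wm β π ∧
    0 ≤ (1 - ε / 4) * qnorm (Rstar wp wm (Aᵀ *ᵥ π)) :=
  directional_derivative_lower_bound_general hm A wp wm hw ε β hε hε' hβ π hpot
end

section
/- Spanners preserve the primal transshipment optimum up to factor α: let G' = (V, E') with E' ⊆ E be a subgraph of G that α-approximates G for some α ≥ 1, with incidence matrix A' and weight matrix W' (the restrictions of A and W to the columns/indices in E'). Then for every b ∈ ℝ^V and every x ∈ ℝ^E with Ax = b, there exists x' ∈ ℝ^{E'} with A'x' = b and ‖W'x'‖₁ ≤ α·‖Wx‖₁; consequently, an optimal solution of the shortest transshipment problem on G' is an α-approximate solution of the shortest transshipment problem on G. -/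
open Matrix BigOperators

/-!
Each edge `e = (u, v)` of `G` is replaced by the unit `u → v` flow along its approximating walk
in `G'`. This flow has the same divergence as `e` and `W'`-cost at most `α w(e)`, so the
superposition `x' = ∑ₑ xₑ · (walk flow of e)` satisfies `A' x' = A x = b`, and by the triangle
inequality `‖W' x'‖₁ ≤ ∑ₑ |xₑ| α w(e) = α ‖W x‖₁`. For the second claim, extending a flow on `G'`
by zero to `G` changes neither its divergence nor its cost, and an optimum on `G'` costs at most
as much as `x'`.
-/

section Onenorm

variable {ι κ : Type*} [Fintype ι] [Fintype κ]

lemma onenorm_add_le (u v : ι → ℝ) : onenorm (u + v) ≤ onenorm u + onenorm v := by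
  unfold onenorm
  rw [← Finset.sum_add_distrib]
  exact Finset.sum_le_sum fun i _ => abs_add_le (u i) (v i)

lemma onenorm_mul_single [DecidableEq ι] (d : ι → ℝ) (i : ι) (c : ℝ) :
    onenorm (fun j => d j * (Pi.single i c : ι → ℝ) j) = |d i * c| := by
  unfold onenorm
  rw [Fintype.sum_eq_single i fun j hj => by simp [hj]]
  simp

lemma onenorm_mul_mulVec_le (R : Matrix ι κ ℝ) (x : κ → ℝ) {d : κ → ℝ} (d' : ι → ℝ) {α : ℝ}
    (hd : ∀ j, 0 ≤ d j) (hR : ∀ j, onenorm (fun i => d' i * R i j) ≤ α * d j) :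
    onenorm (fun i => d' i * (R *ᵥ x) i) ≤ α * onenorm (fun j => d j * x j) := by
  calc onenorm (fun i => d' i * (R *ᵥ x) i)
      ≤ ∑ i, ∑ j, |x j| * |d' i * R i j| := by
        refine Finset.sum_le_sum fun i _ => ?_
        simp only [mulVec, dotProduct, Finset.mul_sum]
        refine (Finset.abs_sum_le_sum_abs _ _).trans_eq (Finset.sum_congr rfl fun j _ => ?_)
        rw [← abs_mul]
        congr 1
        ring
    _ = ∑ j, |x j| * onenorm (fun i => d' i * R i j) := by
        rw [Finset.sum_comm]
        simp only [onenorm, Finset.mul_sum]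
    _ ≤ ∑ j, |x j| * (α * d j) :=
        Finset.sum_le_sum fun j _ => mul_le_mul_of_nonneg_left (hR j) (abs_nonneg _)
    _ = α * onenorm (fun j => d j * x j) := by
        simp only [onenorm, Finset.mul_sum, abs_mul, abs_of_nonneg (hd _)]
        exact Finset.sum_congr rfl fun j _ => by ring

end Onenorm

section Walks

variable {V : Type*} [DecidableEq V] (E' : Finset (V × V))

lemma incMat_apply_eq_single_sub_single [Fintype V] (v : V) (e : ↥E') :
    incMat E' v e = (Pi.single (e : V × V).2 1 - Pi.single (e : V × V).1 1 : V → ℝ) v := by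
  simp only [incMat, Pi.sub_apply, Pi.single_apply]

noncomputable def stepFlow (a b : V) : ↥E' → ℝ :=
  if h : (a, b) ∈ E' then Pi.single ⟨(a, b), h⟩ 1
  else if h' : (b, a) ∈ E' then Pi.single ⟨(b, a), h'⟩ (-1) else 0

noncomputable def walkFlow : V → List V → ↥E' → ℝ
  | _, [] => 0
  | a, b :: l => stepFlow E' a b + walkFlow b l

variable {E'}

lemma incMat_mulVec_stepFlow [Fintype V] {a b : V} (h : stepOK E' a b) :
    incMat E' *ᵥ stepFlow E' a b = Pi.single b 1 - Pi.single a 1 := by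
  ext v
  unfold stepFlow
  by_cases hab : (a, b) ∈ E'
  · simp [hab, incMat_apply_eq_single_sub_single]
  · have hba : (b, a) ∈ E' := h.resolve_left hab
    simp [hab, hba, incMat_apply_eq_single_sub_single]

lemma onenorm_mul_stepFlow {w : V × V → ℝ} (hw : ∀ e ∈ E', 0 ≤ w e) {a b : V}
    (h : stepOK E' a b) :
    onenorm (fun f : ↥E' => w f * stepFlow E' a b f) = stepCost E' w a b := by
  unfold stepFlow stepCost
  by_cases hab : (a, b) ∈ E'
  · simp [hab, onenorm_mul_single, abs_of_nonneg (hw _ hab)]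
  · have hba : (b, a) ∈ E' := h.resolve_left hab
    simp [hab, hba, onenorm_mul_single, abs_of_nonneg (hw _ hba)]

lemma incMat_mulVec_walkFlow [Fintype V] :
    ∀ {a : V} {l : List V}, (a :: l).IsChain (stepOK E') →
      incMat E' *ᵥ walkFlow E' a l =
        Pi.single ((a :: l).getLast (List.cons_ne_nil _ _)) 1 - Pi.single a 1
  | a, [], _ => by simp [walkFlow]
  | a, b :: l, hc => by
    obtain ⟨hab, hbl⟩ := List.isChain_cons_cons.mp hc
    rw [walkFlow, mulVec_add, incMat_mulVec_stepFlow hab, incMat_mulVec_walkFlow hbl,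
      List.getLast_cons (List.cons_ne_nil _ _)]
    abel

lemma onenorm_mul_walkFlow_le {w : V × V → ℝ} (hw : ∀ e ∈ E', 0 ≤ w e) :
    ∀ {a : V} {l : List V}, (a :: l).IsChain (stepOK E') →
      onenorm (fun f : ↥E' => w f * walkFlow E' a l f)
        ≤ (((a :: l).zip l).map fun p => stepCost E' w p.1 p.2).sum
  | a, [], _ => by simp [walkFlow, onenorm]
  | a, b :: l, hc => by
    obtain ⟨hab, hbl⟩ := List.isChain_cons_cons.mp hc
    have hsplit : (fun f : ↥E' => w f * walkFlow E' a (b :: l) f)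
        = (fun f : ↥E' => w f * stepFlow E' a b f) + fun f : ↥E' => w f * walkFlow E' b l f := by
      ext f
      simp only [walkFlow, Pi.add_apply, mul_add]
    rw [hsplit, List.zip_cons_cons, List.map_cons, List.sum_cons, ← onenorm_mul_stepFlow hw hab]
    exact (onenorm_add_le _ _).trans (add_le_add le_rfl (onenorm_mul_walkFlow_le hw hbl))

end Walks

section ExtendByZero

variable {V : Type*} [DecidableEq V] {E E' : Finset (V × V)}

lemma sum_dite_mem_of_subset {M : Type*} [AddCommMonoid M] (hE' : E' ⊆ E) (F : ↥E' → M) :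
    ∑ e : ↥E, (if h : (e : V × V) ∈ E' then F ⟨e, h⟩ else 0) = ∑ f : ↥E', F f := by
  refine (Fintype.sum_of_injective (Set.inclusion hE') (Set.inclusion_injective hE') _ _
    (fun e he => ?_) fun f => by simp).symm
  exact dif_neg fun h => he ⟨⟨e, h⟩, rfl⟩

lemma incMat_mulVec_extendByZero [Fintype V] (hE' : E' ⊆ E) (y : ↥E' → ℝ) :
    incMat E *ᵥ (fun e : ↥E => if h : (e : V × V) ∈ E' then y ⟨e, h⟩ else 0) =
      incMat E' *ᵥ y := by
  ext v
  simp only [mulVec, dotProduct, mul_dite, mul_zero]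
  exact sum_dite_mem_of_subset hE' fun f => incMat E' v f * y f

lemma onenorm_mul_extendByZero (hE' : E' ⊆ E) (w : V × V → ℝ) (y : ↥E' → ℝ) :
    onenorm (fun e : ↥E => w e * if h : (e : V × V) ∈ E' then y ⟨e, h⟩ else 0) =
      onenorm (fun f : ↥E' => w f * y f) := by
  simp only [onenorm, mul_dite, mul_zero, apply_dite abs, abs_zero]
  exact sum_dite_mem_of_subset hE' fun f => |w f * y f|

end ExtendByZero

theorem spanner_primal_lemma_general {V : Type*} [Fintype V] [DecidableEq V]
    (E E' : Finset (V × V)) (hE' : E' ⊆ E)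
    (w : V × V → ℝ) (hw : ∀ e ∈ E, 0 < w e)
    (α : ℝ) (happrox : ApproximatesBy E E' w α)
    (b : V → ℝ) (x : ↥E → ℝ) (hx : incMat E *ᵥ x = b) :
    (∃ x' : ↥E' → ℝ, incMat E' *ᵥ x' = b ∧
      onenorm (fun e : ↥E' => w ↑e * x' e) ≤ α * onenorm (fun e : ↥E => w ↑e * x e)) ∧
    ∀ xopt : ↥E' → ℝ, incMat E' *ᵥ xopt = b →
      (∀ x'' : ↥E' → ℝ, incMat E' *ᵥ x'' = b →
        onenorm (fun e : ↥E' => w ↑e * xopt e) ≤ onenorm (fun e : ↥E' => w ↑e * x'' e)) →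
      incMat E *ᵥ (fun e : ↥E => if h : (e : V × V) ∈ E' then xopt ⟨e, h⟩ else 0) = b ∧
      onenorm (fun e : ↥E => w ↑e *
          (if h : (e : V × V) ∈ E' then xopt ⟨e, h⟩ else 0)) ≤
        α * onenorm (fun e : ↥E => w ↑e * x e) := by
  have hw' : ∀ e ∈ E', 0 ≤ w e := fun e he => (hw e (hE' he)).le
  choose walk hchain hlast hcost using fun e : ↥E => happrox e e.prop
  -- column `e` of `R` routes one unit from the tail to the head of `e` along its walk in `E'`
  let R : Matrix ↥E' ↥E ℝ := Matrix.of fun f e => walkFlow E' (e : V × V).1 (walk e) f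
  have hAR : incMat E' * R = incMat E := by
    ext v e
    have hcol := congrFun (incMat_mulVec_walkFlow (hchain e)) v
    rwa [hlast e, ← incMat_apply_eq_single_sub_single] at hcol
  let x' := R *ᵥ x
  have hx' : incMat E' *ᵥ x' = b := by rw [mulVec_mulVec, hAR, hx]
  have hcost' : onenorm (fun f : ↥E' => w f * x' f) ≤ α * onenorm (fun e : ↥E => w e * x e) :=
    onenorm_mul_mulVec_le R x _ (fun e => (hw e e.prop).le)
      fun e => (onenorm_mul_walkFlow_le hw' (hchain e)).trans (hcost e)
  refine ⟨⟨x', hx', hcost'⟩, fun xopt hopt hmin => ⟨?_, ?_⟩⟩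
  · rw [incMat_mulVec_extendByZero hE', hopt]
  · rw [onenorm_mul_extendByZero hE']
    exact (hmin x' hx').trans hcost'

/-- Spanners preserve the primal transshipment optimum up to factor `α`:
every flow on `G` can be rerouted on the α-approximating subgraph `G'` at cost at
most `α` times larger; consequently, the zero-extension of an optimal solution on `G'`
is an α-approximate solution on `G`. -/
theorem spanner_primal_lemma {V : Type*} [Fintype V] [DecidableEq V]
    (E E' : Finset (V × V)) (hE' : E' ⊆ E)
    (w : V × V → ℝ) (hw : ∀ e ∈ E, 0 < w e)
    (α : ℝ) (hα : 1 ≤ α) (happrox : ApproximatesBy E E' w α)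
    (b : V → ℝ) (x : ↥E → ℝ) (hx : incMat E *ᵥ x = b) :
    (∃ x' : ↥E' → ℝ, incMat E' *ᵥ x' = b ∧
      onenorm (fun e : ↥E' => w ↑e * x' e) ≤ α * onenorm (fun e : ↥E => w ↑e * x e)) ∧
    ∀ xopt : ↥E' → ℝ, incMat E' *ᵥ xopt = b →
      (∀ x'' : ↥E' → ℝ, incMat E' *ᵥ x'' = b →
        onenorm (fun e : ↥E' => w ↑e * xopt e) ≤ onenorm (fun e : ↥E' => w ↑e * x'' e)) →
      incMat E *ᵥ (fun e : ↥E => if h : (e : V × V) ∈ E' then xopt ⟨e, h⟩ else 0) = b ∧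
      onenorm (fun e : ↥E => w ↑e *
          (if h : (e : V × V) ∈ E' then xopt ⟨e, h⟩ else 0)) ≤
        α * onenorm (fun e : ↥E => w ↑e * x e) :=
  spanner_primal_lemma_general E E' hE' w hw α happrox b x hx
end
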